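/- arXiv:2208.12712 — 8 statements merged into one kernel-verified Lean document; each statement's English description precedes it below -/
import Mathlib

section
/- Let Γ be a Borel probability measure on [0,1]². For every δ > 0 there exist h ∈ ℕ, a partition [0,1] = J₁ ∪ … ∪ J_h into intervals, and a measurable set X ⊆ [0,1] with λ(X) < δ, such that for a disintegration {Γ_x} of Γ along the first coordinate, for all i ∈ [h] and all x, y ∈ J_i \ X, the Lévy–Prokhorov distance between Γ_x and Γ_y is less than δ. -/
/-!
Partition the real line into countably many measurable pieces of diameter at most `δ / 6`.
Two probability measures that put mass at most `δ / 6` outside the first `N + 1` pieces and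
nearly the same mass on each of them are `δ / 2`-close in Lévy–Prokhorov distance. Rounding
these masses sorts the points `x` into countably many measurable classes on each of which the
fibres `Γx x` are pairwise `δ / 2`-close. Inner regularity of Lebesgue measure yields finitely
many pairwise disjoint compact subsets of these classes exhausting `[0,1]` up to measure `δ`;
being a positive distance `d` apart, two of their points closer than `d` lie in a common class.
Cutting `[0,1]` into intervals shorter than `d` and discarding the rest of `[0,1]` as `X`
proves the theorem.
-/

open MeasureTheory ProbabilityTheory Set Metric Filter Topology
open scoped ENNReal

lemma abs_sub_lt_of_floor_div_eq_floor_div {u v η : ℝ} (hη : 0 < η)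
    (h : ⌊u / η⌋ = ⌊v / η⌋) : |u - v| < η := by
  have := Int.abs_sub_lt_one_of_floor_eq_floor h
  rwa [← sub_div, abs_div, abs_of_pos hη, div_lt_one hη] at this

lemma measurableSet_accumulate {ι α : Type*} [LE ι] [Countable ι] [MeasurableSpace α]
    {E : ι → Set α} (hE : ∀ i, MeasurableSet (E i)) (i : ι) : MeasurableSet (accumulate E i) := by
  rw [accumulate_def]
  exact .biUnion (to_countable _) fun j _ => hE j

lemma exists_measure_sdiff_accumulate_lt {α : Type*} [MeasurableSpace α] {μ : Measure α}
    {S : Set α} (hS : MeasurableSet S) (hμS : μ S ≠ ∞) {E : ℕ → Set α}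
    (hE : ∀ n, MeasurableSet (E n)) (hSE : S ⊆ ⋃ n, E n) {ε : ℝ≥0∞} (hε : ε ≠ 0) :
    ∃ N, μ (S \ accumulate E N) < ε := by
  have hlim : Tendsto (fun N => μ (S \ accumulate E N)) atTop (𝓝 0) := by
    have := tendsto_measure_iInter_atTop (μ := μ) (s := fun N => S \ accumulate E N)
      (fun N => (hS.diff (measurableSet_accumulate hE N)).nullMeasurableSet)
      (fun M N h => sdiff_subset_sdiff_right (monotone_accumulate h))
      ⟨0, ne_top_of_le_ne_top hμS (measure_mono sdiff_subset)⟩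
    rwa [← sdiff_iUnion, iUnion_accumulate, sdiff_eq_empty.2 hSE, measure_empty] at this
  exact (hlim.eventually (gt_mem_nhds (pos_iff_ne_zero.2 hε))).exists

section LevyProkhorov

variable {Ω : Type*} [PseudoMetricSpace Ω] [MeasurableSpace Ω] {A : ℕ → Set Ω} {a : ℝ}

lemma measure_le_measure_thickening_add_of_pairwise_disjoint (μ ν : Measure Ω)
    (hA : ∀ n, MeasurableSet (A n)) (hAd : Pairwise fun m n => Disjoint (A m) (A n))
    (hAb : ∀ n, Bornology.IsBounded (A n)) (hAa : ∀ n, diam (A n) ≤ a) {N : ℕ} {η : ℝ≥0∞}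
    (hclose : ∀ n ≤ N, μ (A n) ≤ ν (A n) + η) {ε : ℝ} (hε : a < ε) (B : Set Ω) :
    μ B ≤ ν (thickening ε B) + μ (accumulate A N)ᶜ + (N + 1) * η := by
  classical
  set T := (Finset.Iic N).filter fun n => (A n ∩ B).Nonempty
  have hB : B ⊆ (⋃ n ∈ T, A n) ∪ (accumulate A N)ᶜ := by
    intro z hz
    by_cases hzN : z ∈ accumulate A N
    · obtain ⟨n, hn, hzn⟩ := mem_accumulate.1 hzN
      exact Or.inl (mem_biUnion (Finset.mem_filter.2 ⟨Finset.mem_Iic.2 hn, z, hzn, hz⟩) hzn)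
    · exact Or.inr hzN
  have hT : (⋃ n ∈ T, A n) ⊆ thickening ε B := by
    intro y hy
    obtain ⟨n, hn, hyn⟩ := mem_iUnion₂.1 hy
    obtain ⟨z, hzn, hzB⟩ := (Finset.mem_filter.1 hn).2
    exact mem_thickening_iff.2 ⟨z, hzB, (dist_le_diam_of_mem (hAb n) hyn hzn).trans_lt
      ((hAa n).trans_lt hε)⟩
  have hTcard : (T.card : ℝ≥0∞) ≤ N + 1 :=
    mod_cast (Finset.card_filter_le _ _).trans (by simp)
  calc μ B ≤ μ (⋃ n ∈ T, A n) + μ (accumulate A N)ᶜ :=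
      (measure_mono hB).trans (measure_union_le _ _)
    _ ≤ ∑ n ∈ T, μ (A n) + μ (accumulate A N)ᶜ := by
      gcongr; exact measure_biUnion_finset_le _ _
    _ ≤ ∑ n ∈ T, (ν (A n) + η) + μ (accumulate A N)ᶜ := by
      gcongr with n hn
      exact hclose n (Finset.mem_Iic.1 (Finset.mem_filter.1 hn).1)
    _ = ν (⋃ n ∈ T, A n) + T.card * η + μ (accumulate A N)ᶜ := by
      rw [Finset.sum_add_distrib, Finset.sum_const, nsmul_eq_mul,
        measure_biUnion_finset (fun m _ n _ hmn => hAd hmn) fun n _ => hA n]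
    _ ≤ ν (thickening ε B) + (N + 1) * η + μ (accumulate A N)ᶜ := by gcongr
    _ = ν (thickening ε B) + μ (accumulate A N)ᶜ + (N + 1) * η := add_right_comm _ _ _

lemma levyProkhorovDist_le_of_measureReal_le_add [OpensMeasurableSpace Ω] {μ ν : Measure Ω}
    [IsProbabilityMeasure μ] [IsProbabilityMeasure ν] (hA : ∀ n, MeasurableSet (A n))
    (hAd : Pairwise fun m n => Disjoint (A m) (A n))
    (hAb : ∀ n, Bornology.IsBounded (A n)) (hAa : ∀ n, diam (A n) ≤ a) {N : ℕ} {τ η : ℝ}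
    (htail : μ.real (accumulate A N)ᶜ ≤ τ) (hη : 0 ≤ η)
    (hclose : ∀ n ≤ N, μ.real (A n) ≤ ν.real (A n) + η) :
    levyProkhorovDist μ ν ≤ a + τ + (N + 1) * η := by
  have ha : 0 ≤ a := diam_nonneg.trans (hAa 0)
  have hτ : 0 ≤ τ := measureReal_nonneg.trans htail
  refine levyProkhorovDist_le_of_forall_le μ ν (by positivity) fun ε B hε _ => ?_
  have hclose' (n : ℕ) (hn : n ≤ N) : μ (A n) ≤ ν (A n) + ENNReal.ofReal η := by
    rw [← ofReal_measureReal, ← ofReal_measureReal, ← ENNReal.ofReal_add measureReal_nonneg hη]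
    exact ENNReal.ofReal_le_ofReal (hclose n hn)
  have hN : 0 ≤ (N + 1 : ℝ) * η := by positivity
  refine (measure_le_measure_thickening_add_of_pairwise_disjoint μ ν hA hAd hAb hAa hclose'
    (ε := ε) (by linarith) B).trans ?_
  rw [add_assoc]
  gcongr
  calc μ (accumulate A N)ᶜ + (N + 1) * ENNReal.ofReal η
      = ENNReal.ofReal (μ.real (accumulate A N)ᶜ + (N + 1) * η) := by
        rw [ENNReal.ofReal_add measureReal_nonneg hN, ofReal_measureReal,
          ENNReal.ofReal_mul (by positivity)]
        norm_cast
    _ ≤ ENNReal.ofReal ε := ENNReal.ofReal_le_ofReal (by linarith)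

end LevyProkhorov

lemma ProbabilityTheory.Kernel.exists_measurable_cover_levyProkhorovDist_le {α Ω : Type*}
    [MeasurableSpace α] [PseudoMetricSpace Ω] [TopologicalSpace.SeparableSpace Ω]
    [MeasurableSpace Ω] [OpensMeasurableSpace Ω] (κ : Kernel α Ω) [IsMarkovKernel κ]
    {ε : ℝ} (hε : 0 < ε) :
    ∃ E : ℕ → Set α, (∀ n, MeasurableSet (E n)) ∧ ⋃ n, E n = univ ∧
      ∀ n, ∀ x ∈ E n, ∀ y ∈ E n, levyProkhorovDist (κ x) (κ y) ≤ ε := by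
  obtain ⟨A, hA, hAb, hAa, hAU, hAd⟩ :=
    SeparableSpace.exists_measurable_partition_diam_le Ω (by positivity : 0 < ε / 3)
  set η : ℕ → ℝ := fun N => ε / 3 / (N + 1)
  have hη (N : ℕ) : 0 < η N := by positivity
  set cell : (N : ℕ) → α → Fin (N + 1) → ℤ := fun N x j => ⌊(κ x).real (A j) / η N⌋
  set F : (Σ N : ℕ, Fin (N + 1) → ℤ) → Set α := fun p =>
    {x | (κ x).real (accumulate A p.1)ᶜ < ε / 3} ∩ cell p.1 ⁻¹' {p.2}
  have hF_meas (p : Σ N : ℕ, Fin (N + 1) → ℤ) : MeasurableSet (F p) := by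
    have hreal {s : Set Ω} (hs : MeasurableSet s) : Measurable fun x => (κ x).real s :=
      (κ.measurable_coe hs).ennreal_toReal
    exact (measurableSet_lt (hreal (measurableSet_accumulate hA p.1).compl)
      measurable_const).inter
      ((measurable_pi_lambda (cell p.1) fun j => ((hreal (hA j)).div_const (η p.1)).floor)
        (measurableSet_singleton _))
  have hF_cover : ⋃ p, F p = univ := by
    refine eq_univ_of_forall fun x => mem_iUnion.2 ?_
    obtain ⟨N, hN⟩ := exists_measure_sdiff_accumulate_lt (μ := κ x) MeasurableSet.univ
      (measure_ne_top _ _) hA hAU.ge (ENNReal.ofReal_pos.2 (by positivity : 0 < ε / 3)).ne'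
    rw [← compl_eq_univ_sdiff] at hN
    exact ⟨⟨N, cell N x⟩, ENNReal.toReal_lt_of_lt_ofReal hN, rfl⟩
  have hF_close (p : Σ N : ℕ, Fin (N + 1) → ℤ) (x : α) (hx : x ∈ F p) (y : α) (hy : y ∈ F p) :
      levyProkhorovDist (κ x) (κ y) ≤ ε := by
    obtain ⟨N, q⟩ := p
    have hclose (n : ℕ) (hn : n ≤ N) : (κ x).real (A n) ≤ (κ y).real (A n) + η N := by
      have hxy := congr_fun (hx.2.trans hy.2.symm) ⟨n, Nat.lt_succ_of_le hn⟩
      linarith [(abs_lt.1 (abs_sub_lt_of_floor_div_eq_floor_div (hη N) hxy)).2]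
    calc levyProkhorovDist (κ x) (κ y) ≤ ε / 3 + ε / 3 + (N + 1) * η N :=
          levyProkhorovDist_le_of_measureReal_le_add hA hAd hAb hAa hx.1.le (hη N).le hclose
      _ = ε := by simp only [η]; field_simp; ring
  obtain ⟨e, he⟩ := exists_surjective_nat (Σ N : ℕ, Fin (N + 1) → ℤ)
  exact ⟨F ∘ e, fun n => hF_meas _, he.iUnion_comp F ▸ hF_cover, fun n => hF_close _⟩

lemma exists_pos_forall_dist_lt_imp_eq {ι α : Type*} [MetricSpace α] {s : Finset ι}
    {K : ι → Set α} (hK : ∀ i ∈ s, IsCompact (K i)) (hKd : (s : Set ι).PairwiseDisjoint K) :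
    ∃ d > 0, ∀ i ∈ s, ∀ j ∈ s, ∀ x ∈ K i, ∀ y ∈ K j, dist x y < d → i = j := by
  have hpair : ∀ p ∈ s ×ˢ s, ∀ᶠ d in 𝓝[>] (0 : ℝ),
      ∀ x ∈ K p.1, ∀ y ∈ K p.2, dist x y < d → p.1 = p.2 := by
    rintro ⟨i, j⟩ hp
    rw [Finset.mem_product] at hp
    by_cases hij : i = j
    · exact Eventually.of_forall fun _ _ _ _ _ _ => hij
    obtain ⟨r, hr, hsep⟩ := Metric.exists_pos_forall_lt_edist (hK i hp.1) (hK j hp.2).isClosed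
      (hKd hp.1 hp.2 hij)
    filter_upwards [Ioo_mem_nhdsGT (show (0 : ℝ) < r from hr)] with d hd x hx y hy hxy
    have : (r : ℝ) < dist x y := by
      simpa [edist_dist, ENNReal.lt_ofReal_iff_toReal_lt] using hsep x hx y hy
    linarith [hd.2]
  obtain ⟨d, hd, hpos⟩ := ((Finset.eventually_all _).2 hpair |>.and self_mem_nhdsWithin).exists
  exact ⟨d, hpos, fun i hi j hj => hd (i, j) (Finset.mem_product.2 ⟨hi, hj⟩)⟩

lemma MeasurableSet.exists_isCompact_sdiff_lt_forall_dist_lt {α : Type*} [MetricSpace α]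
    [MeasurableSpace α] [OpensMeasurableSpace α] {μ : Measure α} [μ.InnerRegularCompactLTTop]
    {S : Set α} (hS : MeasurableSet S) (hμS : μ S ≠ ∞) {E : ℕ → Set α}
    (hE : ∀ n, MeasurableSet (E n)) (hSE : S ⊆ ⋃ n, E n) {ε : ℝ≥0∞} (hε : ε ≠ 0) :
    ∃ K ⊆ S, IsCompact K ∧ μ (S \ K) < ε ∧
      ∃ d > 0, ∀ x ∈ K, ∀ y ∈ K, dist x y < d → ∃ n, x ∈ E n ∧ y ∈ E n := by
  have hε2 : ε / 2 ≠ 0 := (ENNReal.half_pos hε).ne'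
  obtain ⟨N, hN⟩ := exists_measure_sdiff_accumulate_lt hS hμS hE hSE hε2
  set D : ℕ → Set α := fun n => S ∩ disjointed E n
  have hD (n : ℕ) : MeasurableSet (D n) := hS.inter (MeasurableSet.disjointed hE n)
  obtain ⟨δ, hδ, hδε⟩ := ENNReal.exists_pos_sum_of_countable' hε2 ℕ
  choose C hCD hC hCδ using fun n => (hD n).exists_isCompact_sdiff_lt
    (ne_top_of_le_ne_top hμS (measure_mono inter_subset_left)) (hδ n).ne'
  obtain ⟨d, hd, hsep⟩ := exists_pos_forall_dist_lt_imp_eq (s := Finset.Iic N)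
    (fun n _ => hC n) fun m _ n _ hmn => ((disjoint_disjointed E hmn).mono
      ((hCD m).trans inter_subset_right) ((hCD n).trans inter_subset_right))
  refine ⟨⋃ n ∈ Finset.Iic N, C n, iUnion₂_subset fun n _ => (hCD n).trans inter_subset_left,
    (Finset.Iic N).isCompact_biUnion fun n _ => hC n, ?_, d, hd, ?_⟩
  · have hsub : S \ ⋃ n ∈ Finset.Iic N, C n ⊆
        (S \ accumulate E N) ∪ ⋃ n ∈ Finset.Iic N, (D n \ C n) := by
      rintro x ⟨hxS, hxC⟩
      by_cases hxN : x ∈ accumulate E N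
      · rw [← partialSups_eq_accumulate, ← biUnion_Iic_disjointed] at hxN
        obtain ⟨n, hn, hxn⟩ := mem_iUnion₂.1 hxN
        exact Or.inr (mem_biUnion hn ⟨⟨hxS, hxn⟩, fun h => hxC (mem_biUnion hn h)⟩)
      · exact Or.inl ⟨hxS, hxN⟩
    calc μ (S \ ⋃ n ∈ Finset.Iic N, C n)
        ≤ μ (S \ accumulate E N) + ∑ n ∈ Finset.Iic N, μ (D n \ C n) :=
          (measure_mono hsub).trans ((measure_union_le _ _).trans
            (by gcongr; exact measure_biUnion_finset_le _ _))
      _ < ε / 2 + ε / 2 := ENNReal.add_lt_add hN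
          ((Finset.sum_le_sum fun n _ => (hCδ n).le).trans_lt
            ((ENNReal.sum_le_tsum _).trans_lt hδε))
      _ = ε := ENNReal.add_halves ε
  · rintro x hx y hy hxy
    obtain ⟨m, hm, hxm⟩ := mem_iUnion₂.1 hx
    obtain ⟨n, hn, hyn⟩ := mem_iUnion₂.1 hy
    obtain rfl := hsep m hm n hn x hxm y hyn hxy
    exact ⟨m, disjointed_subset E m (hCD m hxm).2, disjointed_subset E m (hCD m hyn).2⟩

lemma exists_ordConnected_partition_Icc (a b : ℝ) {w : ℝ} (hw : 0 < w) :
    ∃ (h : ℕ) (J : Fin h → Set ℝ),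
      (∀ i, (J i).OrdConnected) ∧
      (∀ i j, i ≠ j → Disjoint (J i) (J j)) ∧
      (⋃ i, J i) = Icc a b ∧
      ∀ i, ∀ x ∈ J i, ∀ y ∈ J i, dist x y < w := by
  set cell : ℝ → ℕ := fun x => ⌊(x - a) / w⌋₊
  have hcell : Monotone cell := fun x y hxy => Nat.floor_mono (by gcongr)
  refine ⟨cell b + 1, fun i => Icc a b ∩ cell ⁻¹' {(i : ℕ)}, fun i => ?_, fun i j hij => ?_,
    ?_, ?_⟩
  · exact ordConnected_Icc.inter (ordConnected_singleton.preimage_mono hcell)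
  · refine disjoint_left.2 fun x hxi hxj => hij (Fin.ext ?_)
    exact hxi.2.symm.trans hxj.2
  · refine (iUnion_subset fun i => inter_subset_left).antisymm fun x hx => mem_iUnion.2 ?_
    exact ⟨⟨cell x, Nat.lt_succ_of_le (hcell hx.2)⟩, hx, rfl⟩
  · rintro i x ⟨hx, hxi⟩ y ⟨hy, hyi⟩
    have hxy : ⌊(x - a) / w⌋ = ⌊(y - a) / w⌋ := by
      have : cell x = cell y := hxi.trans hyi.symm
      rwa [← Int.natCast_floor_eq_floor (div_nonneg (sub_nonneg.2 hx.1) hw.le),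
        ← Int.natCast_floor_eq_floor (div_nonneg (sub_nonneg.2 hy.1) hw.le), Nat.cast_inj]
    simpa [Real.dist_eq] using abs_sub_lt_of_floor_div_eq_floor_div hw hxy

theorem stmt4_general (Γx : ℝ → Measure ℝ) (hmeas : Measurable Γx)
    (hprob : ∀ x, IsProbabilityMeasure (Γx x))
    (δ : ℝ) (hδ : 0 < δ) :
    ∃ (h : ℕ) (J : Fin h → Set ℝ),
      (∀ i, (J i).OrdConnected) ∧
      (∀ i j, i ≠ j → Disjoint (J i) (J j)) ∧
      (⋃ i, J i) = Icc (0 : ℝ) 1 ∧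
      ∃ X : Set ℝ, MeasurableSet X ∧ X ⊆ Icc 0 1 ∧ volume X < ENNReal.ofReal δ ∧
        ∀ i, ∀ x ∈ J i \ X, ∀ y ∈ J i \ X, levyProkhorovDist (Γx x) (Γx y) < δ := by
  let κ : Kernel ℝ ℝ := ⟨Γx, hmeas⟩
  have : IsMarkovKernel κ := ⟨hprob⟩
  obtain ⟨E, hE, hEU, hEδ⟩ := κ.exists_measurable_cover_levyProkhorovDist_le (half_pos hδ)
  obtain ⟨K, -, hK, hKδ, d, hd, hKd⟩ :=
    measurableSet_Icc.exists_isCompact_sdiff_lt_forall_dist_lt (μ := volume) (by simp) hE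
      (hEU ▸ subset_univ _) (ENNReal.ofReal_pos.2 hδ).ne'
  obtain ⟨h, J, hJ, hJd, hJU, hJdist⟩ := exists_ordConnected_partition_Icc 0 1 hd
  refine ⟨h, J, hJ, hJd, hJU, Icc 0 1 \ K, measurableSet_Icc.diff hK.measurableSet,
    sdiff_subset, hKδ, fun i x hx y hy => ?_⟩
  have hJK {z : ℝ} (hz : z ∈ J i \ (Icc 0 1 \ K)) : z ∈ K := by
    by_contra hzK
    exact hz.2 ⟨hJU ▸ mem_iUnion_of_mem i hz.1, hzK⟩
  obtain ⟨n, hxn, hyn⟩ := hKd x (hJK hx) y (hJK hy) (hJdist i x hx.1 y hy.1)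
  exact (hEδ n x hxn y hyn).trans_lt (half_lt_self hδ)

/-- For every probability measure `Γ` on `[0,1]²` with a disintegration
`{Γx x}` along the first coordinate, and every `δ > 0`, there are finitely many
intervals `J 1, …, J h` partitioning `[0,1]` and a measurable set `X` with
`λ(X) < δ` such that on each `J i \ X` the fibers are pairwise `δ`-close in the
Lévy–Prokhorov distance. -/
theorem stmt4 (Γ : Measure (ℝ × ℝ)) [IsProbabilityMeasure Γ]
    (Γx : ℝ → Measure ℝ) (hmeas : Measurable Γx)
    (hprob : ∀ x, IsProbabilityMeasure (Γx x))
    (hdis : ∀ B : Set (ℝ × ℝ), MeasurableSet B →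
      Γ B = ∫⁻ x in Icc (0 : ℝ) 1, Γx x {y | (x, y) ∈ B})
    (δ : ℝ) (hδ : 0 < δ) :
    ∃ (h : ℕ) (J : Fin h → Set ℝ),
      (∀ i, (J i).OrdConnected) ∧
      (∀ i j, i ≠ j → Disjoint (J i) (J j)) ∧
      (⋃ i, J i) = Icc (0 : ℝ) 1 ∧
      ∃ X : Set ℝ, MeasurableSet X ∧ X ⊆ Icc 0 1 ∧ volume X < ENNReal.ofReal δ ∧
        ∀ i, ∀ x ∈ J i \ X, ∀ y ∈ J i \ X, levyProkhorovDist (Γx x) (Γx y) < δ :=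
  stmt4_general Γx hmeas hprob δ hδ
end

section
/- Suppose A is a permutation of order k and Γ is an A-avoiding permuton, with a fixed disintegration {Γ_x}_{x∈[0,1]} along the first coordinate. Then for Lebesgue-almost every x ∈ [0,1], the fiber Γ_x is supported on a set of at most k−1 points. -/
open MeasureTheory Set

/-- Geometric representations of the pattern `A`: `k`-tuples of points of the plane
with strictly increasing x-coordinates whose y-coordinates are ordered according
to `A`. -/
def patternSet {k : ℕ} (A : Equiv.Perm (Fin k)) : Set (Fin k → ℝ × ℝ) :=
  {f | StrictMono (fun i => (f i).1) ∧ ∀ i j : Fin k, A i < A j ↔ (f i).2 < (f j).2}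

/-!
If the fibre `Γx x` is not carried by `k - 1` points, its support contains `k` points, and these
can be separated by rational intervals `J₀ < ⋯ < J_{k-1}` of positive fibre mass. For one fixed
such family, the set `E` of those `x` whose fibre charges every `Jₘ` is null: otherwise, the
base measure having no atoms, the same argument applied to it restricted to `E` cuts `E` into
pieces `E₀ < ⋯ < E_{k-1}` of positive measure, and the boxes `Eᵢ × J_{A i}` have positive
`Γ`-mass while their product consists of copies of `A`. Countably many rational families
cover every bad `x`.
-/

open Filter Topology

def IooOrdered {k : ℕ} (q r : Fin k → ℚ) : Prop :=
  ∀ m m', m < m' → r m ≤ q m'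

lemma MeasureTheory.Measure.exists_finset_subset_support_card_eq {X : Type*} [TopologicalSpace X]
    [MeasurableSpace X] [HereditarilyLindelofSpace X] (μ : Measure X) {k : ℕ}
    (h : ∀ P : Finset X, μ (↑P)ᶜ = 0 → k ≤ P.card) :
    ∃ F : Finset X, ↑F ⊆ μ.support ∧ F.card = k := by
  by_cases hfin : μ.support.Finite
  · have hk : k ≤ hfin.toFinset.card := h _ (by simp)
    obtain ⟨F, hF, hcard⟩ := Finset.exists_subset_card_eq hk
    exact ⟨F, by simpa using hF, hcard⟩
  · exact Set.Infinite.exists_subset_card_eq hfin k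

lemma exists_rat_Ioo_of_strictMono {k : ℕ} {y : Fin k → ℝ} (hy : StrictMono y) :
    ∃ q r : Fin k → ℚ, (∀ m, y m ∈ Ioo (q m : ℝ) (r m)) ∧ IooOrdered q r := by
  have hgap : ∀ᶠ δ in 𝓝[>] (0 : ℝ), ∀ m m', m < m' → y m + 2 * δ ≤ y m' := by
    refine eventually_all.2 fun m => eventually_all.2 fun m' => ?_
    by_cases hm : m < m'
    · have : ∀ᶠ δ in 𝓝[>] (0 : ℝ), δ < (y m' - y m) / 2 :=
        nhdsWithin_le_nhds (eventually_lt_nhds (by linarith [hy hm]))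
      exact this.mono fun δ hδ _ => by linarith
    · exact Eventually.of_forall fun _ h => absurd h hm
  obtain ⟨δ, hδ, hδpos : 0 < δ⟩ := (hgap.and self_mem_nhdsWithin).exists
  choose q hq using fun m => exists_rat_btwn (show y m - δ < y m by linarith)
  choose r hr using fun m => exists_rat_btwn (show y m < y m + δ by linarith)
  refine ⟨q, r, fun m => ⟨(hq m).2, (hr m).1⟩, fun m m' hm => ?_⟩
  exact_mod_cast (show (r m : ℝ) ≤ q m' by linarith [hδ m m' hm, (hr m).2, (hq m').1])

lemma exists_rat_Ioo_measure_pos (μ : Measure ℝ) {k : ℕ}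
    (h : ∀ P : Finset ℝ, μ (↑P)ᶜ = 0 → k ≤ P.card) :
    ∃ q r : Fin k → ℚ, IooOrdered q r ∧ ∀ m, 0 < μ (Ioo (q m : ℝ) (r m)) := by
  obtain ⟨F, hFsupp, hFcard⟩ := μ.exists_finset_subset_support_card_eq h
  set y : Fin k → ℝ := fun m => F.orderIsoOfFin hFcard m
  have hy : StrictMono y := fun m m' hm => (F.orderIsoOfFin hFcard).strictMono hm
  obtain ⟨q, r, hyqr, hqr⟩ := exists_rat_Ioo_of_strictMono hy
  refine ⟨q, r, hqr, fun m => ?_⟩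
  exact (Measure.mem_support_iff_forall _).1 (hFsupp (F.orderIsoOfFin hFcard m).2) _
    (Ioo_mem_nhds (hyqr m).1 (hyqr m).2)

lemma IooOrdered.lt {k : ℕ} {q r : Fin k → ℚ} (hqr : IooOrdered q r) {m m' : Fin k}
    (hm : m < m') {a b : ℝ} (ha : a ∈ Ioo (q m : ℝ) (r m)) (hb : b ∈ Ioo (q m' : ℝ) (r m')) :
    a < b :=
  calc a < r m := ha.2
    _ ≤ q m' := by exact_mod_cast hqr m m' hm
    _ < b := hb.1

lemma pi_prod_subset_patternSet {k : ℕ} (A : Equiv.Perm (Fin k)) {X Y : Fin k → Set ℝ}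
    (hX : ∀ i j, i < j → ∀ a ∈ X i, ∀ b ∈ X j, a < b)
    (hY : ∀ i j, A i < A j → ∀ a ∈ Y i, ∀ b ∈ Y j, a < b) :
    univ.pi (fun i => X i ×ˢ Y i) ⊆ patternSet A := by
  intro f hf
  simp only [mem_univ_pi, mem_prod] at hf
  refine ⟨fun i j hij => hX i j hij _ (hf i).1 _ (hf j).1, fun i j => ⟨?_, fun hlt => ?_⟩⟩
  · exact fun hA => hY i j hA _ (hf i).2 _ (hf j).2
  · rcases lt_trichotomy (A i) (A j) with hA | hA | hA
    · exact hA
    · exact absurd hlt (by rw [A.injective hA]; exact lt_irrefl _)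
    · exact absurd (hY j i hA _ (hf j).2 _ (hf i).2) hlt.asymm

section Disintegration

variable {ν : Measure ℝ} {Γ : Measure (ℝ × ℝ)} {Γx : ℝ → Measure ℝ}

lemma measure_prod_ne_zero_of_fiber_pos (hmeas : Measurable Γx)
    (hdis : ∀ B : Set (ℝ × ℝ), MeasurableSet B → Γ B = ∫⁻ x, Γx x {y | (x, y) ∈ B} ∂ν)
    {X Y : Set ℝ} (hX : MeasurableSet X) (hY : MeasurableSet Y) (hXν : ν X ≠ 0)
    (hpos : ∀ x ∈ X, 0 < Γx x Y) : Γ (X ×ˢ Y) ≠ 0 := by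
  have hfiber : ∀ x ∈ X, Γx x Y ≤ Γx x {y | (x, y) ∈ X ×ˢ Y} := fun x hx => by
    rw [show {y | (x, y) ∈ X ×ˢ Y} = Y from mk_preimage_prod_right hx]
  have hint : 0 < ∫⁻ x in X, Γx x Y ∂ν := by
    rw [setLIntegral_pos_iff (f := fun x => Γx x Y) ((Measure.measurable_coe hY).comp hmeas)]
    have hsupp : X ⊆ Function.support fun x => Γx x Y := fun x hx => (hpos x hx).ne'
    rwa [inter_eq_right.2 hsupp, pos_iff_ne_zero]
  rw [hdis _ (hX.prod hY)]
  refine (hint.trans_le ?_).ne'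
  calc ∫⁻ x in X, Γx x Y ∂ν ≤ ∫⁻ x in X, Γx x {y | (x, y) ∈ X ×ˢ Y} ∂ν :=
        setLIntegral_mono' hX hfiber
    _ ≤ ∫⁻ x, Γx x {y | (x, y) ∈ X ×ˢ Y} ∂ν := setLIntegral_le_lintegral _ _

theorem measure_setOf_fiber_Ioo_pos_eq_zero [NullSingletonClass ν] [SigmaFinite Γ] {k : ℕ}
    (A : Equiv.Perm (Fin k)) (havoid : Measure.pi (fun _ : Fin k => Γ) (patternSet A) = 0)
    (hmeas : Measurable Γx)
    (hdis : ∀ B : Set (ℝ × ℝ), MeasurableSet B → Γ B = ∫⁻ x, Γx x {y | (x, y) ∈ B} ∂ν)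
    {q r : Fin k → ℚ} (hqr : IooOrdered q r) :
    ν {x | ∀ m, 0 < Γx x (Ioo (q m : ℝ) (r m))} = 0 := by
  set E := {x | ∀ m, 0 < Γx x (Ioo (q m : ℝ) (r m))}
  have hE : MeasurableSet E := by
    simp only [E, ofPred_forall]
    exact MeasurableSet.iInter fun m =>
      measurableSet_lt measurable_const ((Measure.measurable_coe measurableSet_Ioo).comp hmeas)
  by_contra hEν
  obtain ⟨q', r', hqr', hpos'⟩ : ∃ q' r' : Fin k → ℚ, IooOrdered q' r' ∧
      ∀ m, 0 < ν.restrict E (Ioo (q' m : ℝ) (r' m)) := by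
    refine exists_rat_Ioo_measure_pos _ fun P hP => absurd ?_ hEν
    rw [← Measure.restrict_apply_univ, ← union_compl_self (P : Set ℝ)]
    exact measure_union_null (P.measure_zero _) hP
  set X : Fin k → Set ℝ := fun i => Ioo (q' i : ℝ) (r' i) ∩ E
  set Y : Fin k → Set ℝ := fun i => Ioo (q (A i) : ℝ) (r (A i))
  have hbox : ∀ i, Γ (X i ×ˢ Y i) ≠ 0 := fun i =>
    measure_prod_ne_zero_of_fiber_pos hmeas hdis (measurableSet_Ioo.inter hE) measurableSet_Ioo
      (by rw [← Measure.restrict_apply measurableSet_Ioo]; exact (hpos' i).ne')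
      fun x hx => hx.2 (A i)
  have hsub : univ.pi (fun i => X i ×ˢ Y i) ⊆ patternSet A :=
    pi_prod_subset_patternSet A (fun i j hij a ha b hb => hqr'.lt hij ha.1 hb.1)
      fun i j hA a ha b hb => hqr.lt hA ha hb
  have hpi : Measure.pi (fun _ => Γ) (univ.pi fun i => X i ×ˢ Y i) ≠ 0 := by
    rw [Measure.pi_pi]
    exact Finset.prod_ne_zero_iff.2 fun i _ => hbox i
  exact hpi (measure_mono_null hsub havoid)

end Disintegration

theorem stmt5_general (k : ℕ) (A : Equiv.Perm (Fin k)) (Γ : Measure (ℝ × ℝ))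
    [IsProbabilityMeasure Γ]
    (havoid : Measure.pi (fun _ : Fin k => Γ) (patternSet A) = 0)
    (Γx : ℝ → Measure ℝ) (hmeas : Measurable Γx)
    (hdis : ∀ B : Set (ℝ × ℝ), MeasurableSet B →
      Γ B = ∫⁻ x in Icc (0 : ℝ) 1, Γx x {y | (x, y) ∈ B}) :
    ∀ᵐ x ∂(volume.restrict (Icc (0 : ℝ) 1)),
      ∃ P : Finset ℝ, P.card ≤ k - 1 ∧ Γx x ((↑P : Set ℝ)ᶜ) = 0 := by
  let Chains := {qr : (Fin k → ℚ) × (Fin k → ℚ) // IooOrdered qr.1 qr.2}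
  have hcover : {x | ¬ ∃ P : Finset ℝ, P.card ≤ k - 1 ∧ Γx x ((↑P : Set ℝ)ᶜ) = 0} ⊆
      ⋃ qr : Chains, {x | ∀ m, 0 < Γx x (Ioo (qr.1.1 m : ℝ) (qr.1.2 m))} := by
    intro x hx
    obtain ⟨q, r, hqr, hpos⟩ := exists_rat_Ioo_measure_pos (k := k) (Γx x) fun P hP => by
      by_contra hcard
      exact hx ⟨P, by omega, hP⟩
    exact mem_iUnion.2 ⟨⟨(q, r), hqr⟩, hpos⟩
  rw [ae_iff]
  exact measure_mono_null hcover <| measure_iUnion_null fun qr =>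
    measure_setOf_fiber_Ioo_pos_eq_zero A havoid hmeas hdis qr.2

/-- If `Γ` is an `A`-avoiding permuton with disintegration `{Γx x}`,
then almost every fiber is supported on at most `k - 1` points. -/
theorem stmt5 (k : ℕ) (A : Equiv.Perm (Fin k)) (Γ : Measure (ℝ × ℝ))
    [IsProbabilityMeasure Γ]
    (hmarg : ∀ B : Set ℝ, MeasurableSet B →
      Γ (B ×ˢ univ) = volume (B ∩ Icc 0 1) ∧ Γ (univ ×ˢ B) = volume (B ∩ Icc 0 1))
    (havoid : Measure.pi (fun _ : Fin k => Γ) (patternSet A) = 0)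
    (Γx : ℝ → Measure ℝ) (hmeas : Measurable Γx)
    (hdis : ∀ B : Set (ℝ × ℝ), MeasurableSet B →
      Γ B = ∫⁻ x in Icc (0 : ℝ) 1, Γx x {y | (x, y) ∈ B}) :
    ∀ᵐ x ∂(volume.restrict (Icc (0 : ℝ) 1)),
      ∃ P : Finset ℝ, P.card ≤ k - 1 ∧ Γx x ((↑P : Set ℝ)ᶜ) = 0 :=
  stmt5_general k A Γ havoid Γx hmeas hdis
end

section
/- Let π be a permutation of [k] and let L : [0,1] → [0,1] be the piecewise linear function consisting of k−1 linear pieces on the intervals [(i−1)/(k−1), i/(k−1)], where the i-th piece has slope k−1 (going from 0 to 1) if π(i) > π(i+1), and slope −(k−1) (going from 1 to 0) if π(i) < π(i+1). Suppose 0 ≤ x₁ < … < x_ℓ ≤ 1 for some ℓ ∈ [k], none of the x_i lying in {j/(k−1) : j ∈ ℤ}, and the points (x_i, L(x_i)) induce the pattern π restricted to [ℓ] (i.e., L(x_i) < L(x_j) iff π(i) < π(j) for i < j ≤ ℓ). Then x_ℓ > (ℓ−1)/(k−1). -/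
open Set

/-- Let `π ∈ S(k)` and let `L` be the piecewise linear zig-zag on `[0,1]`
with `k-1` pieces, the `i`-th piece (on `[i/(k-1),(i+1)/(k-1)]`, 0-based `i`) increasing
from 0 to 1 if `π(i) > π(i+1)` and decreasing from 1 to 0 if `π(i) < π(i+1)`.
If `x₁ < … < x_ℓ` (`ℓ ≤ k`) avoid the grid `{j/(k-1)}` and the points `(x_i, L(x_i))`
induce the pattern `π` restricted to the first `ℓ` entries, then `x_ℓ > (ℓ-1)/(k-1)`. -/
theorem stmt8 (k : ℕ) (hk : 2 ≤ k) (π : Equiv.Perm (Fin k)) (L : ℝ → ℝ)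
    (hL : ∀ i : ℕ, (h : i + 1 < k) →
      ∀ x ∈ Ioo ((i : ℝ) / (k - 1)) (((i : ℝ) + 1) / (k - 1)),
        (π ⟨i + 1, h⟩ < π ⟨i, by omega⟩ → L x = (k - 1) * x - i) ∧
        (π ⟨i, by omega⟩ < π ⟨i + 1, h⟩ → L x = ((i : ℝ) + 1) - (k - 1) * x))
    (ℓ : ℕ) (hℓ1 : 1 ≤ ℓ) (hℓk : ℓ ≤ k)
    (x : Fin ℓ → ℝ) (hmono : StrictMono x)
    (hrange : ∀ i, x i ∈ Icc (0 : ℝ) 1)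
    (hgrid : ∀ i : Fin ℓ, ∀ j : ℤ, x i ≠ (j : ℝ) / (k - 1))
    (hpat : ∀ i j : Fin ℓ,
      π (Fin.castLE hℓk i) < π (Fin.castLE hℓk j) ↔ L (x i) < L (x j)) :
    ((ℓ : ℝ) - 1) / (k - 1) < x ⟨ℓ - 1, by omega⟩ := by
  have hk2 : (2 : ℝ) ≤ (k : ℝ) := by exact_mod_cast hk
  have hkpos : (0 : ℝ) < (k : ℝ) - 1 := by linarith
  have key : ∀ j : ℕ, ∀ h : j < ℓ, (j : ℝ) / ((k : ℝ) - 1) < x ⟨j, h⟩ := by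
    intro j
    induction j with
    | zero =>
      intro h
      have h0 := (hrange ⟨0, h⟩).1
      have hne := hgrid ⟨0, h⟩ 0
      simp only [Int.cast_zero, zero_div] at hne
      simpa using lt_of_le_of_ne h0 (Ne.symm hne)
    | succ j ih =>
      intro h
      have hj : j < ℓ := by omega
      have hjk : j + 1 < k := by omega
      have hx_lt : x ⟨j, hj⟩ < x ⟨j + 1, h⟩ := hmono (by simp [Fin.lt_def])
      by_contra hcon
      push_neg at hcon
      have hne := hgrid ⟨j + 1, h⟩ (j + 1)
      push_cast at hne hcon
      have hlt : x ⟨j + 1, h⟩ < ((j : ℝ) + 1) / ((k : ℝ) - 1) :=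
        lt_of_le_of_ne hcon hne
      have hmemj : x ⟨j, hj⟩ ∈ Ioo ((j : ℝ) / ((k : ℝ) - 1)) (((j : ℝ) + 1) / ((k : ℝ) - 1)) :=
        ⟨ih hj, lt_trans hx_lt hlt⟩
      have hmemj1 : x ⟨j + 1, h⟩ ∈ Ioo ((j : ℝ) / ((k : ℝ) - 1)) (((j : ℝ) + 1) / ((k : ℝ) - 1)) :=
        ⟨lt_trans (ih hj) hx_lt, hlt⟩
      have hLj := hL j hjk _ hmemj
      have hLj1 := hL j hjk _ hmemj1
      have hcast : Fin.castLE hℓk (⟨j, hj⟩ : Fin ℓ) = (⟨j, by omega⟩ : Fin k) := rfl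
      have hcast1 : Fin.castLE hℓk (⟨j + 1, h⟩ : Fin ℓ) = (⟨j + 1, hjk⟩ : Fin k) := rfl
      rcases lt_trichotomy (π ⟨j + 1, hjk⟩) (π ⟨j, by omega⟩) with hc | hc | hc
      · -- increasing piece: L xj < L xj1, so π j < π (j+1), contradicting hc
        have e1 := hLj.1 hc
        have e2 := hLj1.1 hc
        have hLlt : L (x ⟨j, hj⟩) < L (x ⟨j + 1, h⟩) := by
          rw [e1, e2]
          have := mul_lt_mul_of_pos_left hx_lt hkpos
          linarith
        have := (hpat ⟨j, hj⟩ ⟨j + 1, h⟩).2 hLlt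
        rw [hcast, hcast1] at this
        exact absurd this (lt_asymm hc)
      · exact absurd (congrArg π.symm hc) (by simp [Fin.ext_iff])
      · -- decreasing piece
        have e1 := hLj.2 hc
        have e2 := hLj1.2 hc
        have hLlt : L (x ⟨j + 1, h⟩) < L (x ⟨j, hj⟩) := by
          rw [e1, e2]
          have := mul_lt_mul_of_pos_left hx_lt hkpos
          linarith
        have := (hpat ⟨j + 1, h⟩ ⟨j, hj⟩).2 hLlt
        rw [hcast, hcast1] at this
        exact absurd this (lt_asymm hc)
  have := key (ℓ - 1) (by omega)
  have hc : ((ℓ - 1 : ℕ) : ℝ) = (ℓ : ℝ) - 1 := by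
    push_cast [Nat.cast_sub hℓ1]; ring
  rwa [hc] at this
end

section
/- For every permutation A of [k] with k ≥ 2 there exists an A-avoiding permuton Γ such that for a disintegration {Γ_x} along the first coordinate, almost every fiber Γ_x is supported on exactly k−1 atoms (and not fewer). -/
/-!
Split `[0, 1]²` into `n = k - 1` horizontal bands and put the uniform measure of mass `1/n` on
one diagonal segment of each band: band `j` gets the increasing diagonal if the value `j + 1`
precedes the value `j` in `A`, and the decreasing one otherwise. Both marginals are uniform and
the fibre over almost every `x` consists of `n` atoms, one per band. Given `k = n + 1` points on
the support, the band index is nondecreasing in the height rank, so rank minus band index moves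
from `≤ 0` at rank `0` to `≥ 1` at rank `n` in steps of at most one; where it steps from `0` to
`1`, the consecutive values `u, u + 1` both lie in band `u`. Their horizontal order is then forced
by the orientation of that band, and it is the opposite of the one `A` prescribes.
-/

open MeasureTheory Set

open scoped ENNReal
open ProbabilityTheory

noncomputable section

lemma volume_preimage_affine {a : ℝ} (ha : a ≠ 0) (b : ℝ) (s : Set ℝ) :
    volume ((fun x => b + a * x) ⁻¹' s) = ENNReal.ofReal |a⁻¹| * volume s := by
  change volume ((a * ·) ⁻¹' ((b + ·) ⁻¹' s)) = _
  rw [Real.volume_preimage_mul_left ha, measure_preimage_add]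

lemma sum_measure_inter_Ioc_of_monotone {α : Type*} [LinearOrder α] [TopologicalSpace α]
    [OrderClosedTopology α] [MeasurableSpace α] [OpensMeasurableSpace α] (μ : Measure α)
    {a : ℕ → α} (ha : Monotone a) (s : Set α) (m : ℕ) :
    ∑ i ∈ Finset.range m, μ (s ∩ Ioc (a i) (a (i + 1))) = μ (s ∩ Ioc (a 0) (a m)) := by
  induction m with
  | zero => simp
  | succ m ih =>
    rw [Finset.sum_range_succ, ih,
      ← measure_inter_add_sdiff (s ∩ Ioc (a 0) (a (m + 1))) (measurableSet_Iic (a := a m)),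
      inter_assoc, Ioc_inter_Iic, inf_eq_right.2 (ha m.le_succ), inter_sdiff_assoc, Ioc_sdiff_Iic,
      max_eq_right (ha m.zero_le)]

lemma Fin.exists_castSucc_eq_succ_eq_of_monotone {n : ℕ} {g : Fin (n + 1) → Fin n}
    (hg : Monotone g) : ∃ u : Fin n, g u.castSucc = u ∧ g u.succ = u := by
  suffices h : ∀ m : Fin (n + 1), (g m : ℕ) < m →
      ∃ u : Fin n, g u.castSucc = u ∧ g u.succ = u from
    h (Fin.last n) (by simp)
  intro m
  induction m using Fin.induction with
  | zero => simp
  | succ w ih =>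
    intro hw
    by_cases hlt : (g w.castSucc : ℕ) < w
    · exact ih hlt
    · have hle : g w.castSucc ≤ g w.succ := hg (Fin.castSucc_le_succ w)
      simp only [Fin.val_succ] at hw
      refine ⟨w, ?_, ?_⟩ <;> ext <;> simp only [Fin.le_iff_val_le_val] at hle <;> omega

instance : IsProbabilityMeasure (volume.restrict (Icc (0 : ℝ) 1)) :=
  ⟨by simp⟩

lemma ae_restrict_Icc_mem_Ioo : ∀ᵐ x ∂volume.restrict (Icc (0 : ℝ) 1), x ∈ Ioo 0 1 := by
  rw [← Measure.restrict_congr_set Ioo_ae_eq_Icc]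
  exact ae_restrict_mem measurableSet_Ioo

def bandLine (n j : ℕ) (rev : Bool) (x : ℝ) : ℝ :=
  (j + if rev then 1 - x else x) / n

section bandLine

variable {n : ℕ} [NeZero n] (j : ℕ) (rev : Bool)

omit [NeZero n] in
@[fun_prop]
lemma continuous_bandLine : Continuous (bandLine n j rev) := by
  unfold bandLine
  cases rev <;> simp only [Bool.false_eq_true, if_true, if_false] <;> fun_prop

lemma strictMono_bandLine_false : StrictMono (bandLine n j false) := by
  intro x x' h
  simp only [bandLine, Bool.false_eq_true, if_false]
  gcongr
  exact Nat.cast_pos.2 n.pos_of_neZero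

lemma strictAnti_bandLine_true : StrictAnti (bandLine n j true) := by
  intro x x' h
  simp only [bandLine, if_true]
  gcongr
  exact Nat.cast_pos.2 n.pos_of_neZero

lemma bandLine_mem_Ioo_iff {x : ℝ} :
    bandLine n j rev x ∈ Ioo ((j : ℝ) / n) ((j + 1) / n) ↔ x ∈ Ioo 0 1 := by
  have hn : (0 : ℝ) < n := Nat.cast_pos.2 n.pos_of_neZero
  simp only [bandLine, mem_Ioo, div_lt_div_iff_of_pos_right hn]
  cases rev <;> simp only [Bool.false_eq_true, if_true, if_false] <;> constructor <;>
    rintro ⟨h₀, h₁⟩ <;> constructor <;> linarith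

lemma bandLine_lt_bandLine {j j' : ℕ} (hj : j < j') (rev rev' : Bool) {x x' : ℝ}
    (hx : x ∈ Ioo 0 1) (hx' : x' ∈ Ioo 0 1) : bandLine n j rev x < bandLine n j' rev' x' := by
  have hjj' : (j : ℝ) + 1 ≤ j' := by exact_mod_cast hj
  calc bandLine n j rev x < (j + 1) / n := ((bandLine_mem_Ioo_iff j rev).2 hx).2
    _ ≤ j' / n := by gcongr
    _ < bandLine n j' rev' x' := ((bandLine_mem_Ioo_iff j' rev').2 hx').1

lemma volume_preimage_bandLine_inter_Ioo (s : Set ℝ) :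
    volume (bandLine n j rev ⁻¹' s ∩ Ioo 0 1) =
      n * volume (s ∩ Ioo ((j : ℝ) / n) ((j + 1) / n)) := by
  have hn : (0 : ℝ) < n := Nat.cast_pos.2 n.pos_of_neZero
  have hpre : bandLine n j rev ⁻¹' s ∩ Ioo 0 1 =
      bandLine n j rev ⁻¹' (s ∩ Ioo ((j : ℝ) / n) ((j + 1) / n)) := by
    ext x
    simp only [mem_inter_iff, mem_preimage, bandLine_mem_Ioo_iff j rev]
  obtain ⟨a, b, ha, hinv, hline⟩ : ∃ a b : ℝ, a ≠ 0 ∧ |a⁻¹| = n ∧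
      bandLine n j rev = fun x => b + a * x := by
    cases rev
    · refine ⟨1 / n, j / n, by positivity, by simp, ?_⟩
      funext x
      simp only [bandLine, Bool.false_eq_true, if_false]
      ring
    · refine ⟨-1 / n, (j + 1) / n, by simp [hn.ne'], by simp [div_neg, abs_of_pos hn], ?_⟩
      funext x
      simp only [bandLine, if_true]
      ring
  rw [hpre, hline, volume_preimage_affine ha, hinv, ENNReal.ofReal_natCast]

lemma sum_volume_inter_band (s : Set ℝ) :
    ∑ j : Fin n, volume (s ∩ Ioo ((j : ℝ) / n) ((j + 1) / n)) = volume (s ∩ Icc 0 1) := by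
  have hmono : Monotone fun i : ℕ => (i : ℝ) / n := fun i i' h => by
    dsimp only
    gcongr
  have hsum := sum_measure_inter_Ioc_of_monotone volume hmono s n
  simp only [Nat.cast_zero, zero_div, div_self (NeZero.ne (n : ℝ)), Nat.cast_succ] at hsum
  rw [Fin.sum_univ_eq_sum_range (fun i => volume (s ∩ Ioo ((i : ℝ) / n) ((i + 1) / n))),
    measure_congr ((ae_eq_refl s).inter Ioc_ae_eq_Icc).symm, ← hsum]
  exact Finset.sum_congr rfl fun i _ => measure_congr ((ae_eq_refl s).inter Ioo_ae_eq_Ioc)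

end bandLine

def bandFiber (n : ℕ) (rev : Fin n → Bool) (x : ℝ) : Measure ℝ :=
  (n : ℝ≥0∞)⁻¹ • ∑ j : Fin n, Measure.dirac (bandLine n j (rev j) x)

def bandValues (n : ℕ) (rev : Fin n → Bool) (x : ℝ) : Finset ℝ :=
  Finset.univ.image fun j : Fin n => bandLine n j (rev j) x

section bandFiber

variable {n : ℕ} (rev : Fin n → Bool)

lemma bandFiber_apply (x : ℝ) {s : Set ℝ} (hs : MeasurableSet s) :
    bandFiber n rev x s =
      (n : ℝ≥0∞)⁻¹ * ∑ j : Fin n, s.indicator 1 (bandLine n j (rev j) x) := by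
  simp only [bandFiber, Measure.smul_apply, Measure.finsetSum_apply, smul_eq_mul,
    Measure.dirac_apply' _ hs]

lemma measurable_bandFiber : Measurable (bandFiber n rev) := by
  refine Measure.measurable_of_measurable_coe _ fun s hs => ?_
  simp only [bandFiber_apply rev _ hs]
  exact (Finset.measurable_sum _ fun j _ =>
    (measurable_one.indicator hs).comp (continuous_bandLine _ _).measurable).const_mul _

lemma isProbabilityMeasure_bandFiber [NeZero n] (x : ℝ) :
    IsProbabilityMeasure (bandFiber n rev x) :=
  ⟨by simp [bandFiber_apply rev x MeasurableSet.univ,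
    ENNReal.inv_mul_cancel (NeZero.ne (n : ℝ≥0∞)) (ENNReal.natCast_ne_top n)]⟩

lemma bandFiber_compl_bandValues (x : ℝ) : bandFiber n rev x (bandValues n rev x)ᶜ = 0 := by
  rw [bandFiber_apply rev x (Finset.measurableSet _).compl]
  simp [bandValues]

lemma bandFiber_singleton_pos {x p : ℝ} (hp : p ∈ bandValues n rev x) :
    0 < bandFiber n rev x {p} := by
  obtain ⟨j, -, rfl⟩ := Finset.mem_image.1 hp
  rw [bandFiber_apply rev x (measurableSet_singleton _)]
  refine ENNReal.mul_pos (ENNReal.inv_ne_zero.2 (ENNReal.natCast_ne_top n)) ?_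
  exact (Finset.sum_pos_iff.2 ⟨j, Finset.mem_univ j, by simp⟩).ne'

lemma card_bandValues [NeZero n] {x : ℝ} (hx : x ∈ Ioo 0 1) :
    (bandValues n rev x).card = n := by
  have hmono : StrictMono fun j : Fin n => bandLine n j (rev j) x :=
    fun j j' hj => bandLine_lt_bandLine hj _ _ hx hx
  rw [bandValues, Finset.card_image_of_injective _ hmono.injective, Finset.card_univ,
    Fintype.card_fin]

lemma setLIntegral_bandFiber_Ioo [NeZero n] {s : Set ℝ} (hs : MeasurableSet s) :
    ∫⁻ x in Ioo 0 1, bandFiber n rev x s = volume (s ∩ Icc 0 1) := by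
  have hpre : ∀ j : Fin n, MeasurableSet (bandLine n j (rev j) ⁻¹' s) :=
    fun j => (continuous_bandLine _ _).measurable hs
  have hind : ∀ (j : Fin n) x, s.indicator 1 (bandLine n j (rev j) x) =
      (bandLine n j (rev j) ⁻¹' s).indicator (1 : ℝ → ℝ≥0∞) x := fun _ _ => rfl
  simp only [bandFiber_apply rev _ hs, hind]
  rw [lintegral_const_mul' _ _ (ENNReal.inv_ne_top.2 (NeZero.ne _)),
    lintegral_finsetSum _ fun j _ => measurable_one.indicator (hpre j)]
  simp only [lintegral_indicator_one (hpre _), Measure.restrict_apply (hpre _),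
    volume_preimage_bandLine_inter_Ioo]
  rw [← Finset.mul_sum, ← mul_assoc,
    ENNReal.inv_mul_cancel (NeZero.ne _) (ENNReal.natCast_ne_top n), one_mul,
    sum_volume_inter_band]

end bandFiber

def bandKernel (n : ℕ) (rev : Fin n → Bool) : Kernel ℝ ℝ :=
  ⟨bandFiber n rev, measurable_bandFiber rev⟩

instance {n : ℕ} [NeZero n] (rev : Fin n → Bool) : IsMarkovKernel (bandKernel n rev) :=
  ⟨isProbabilityMeasure_bandFiber rev⟩

def bandPermuton (n : ℕ) (rev : Fin n → Bool) : Measure (ℝ × ℝ) :=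
  volume.restrict (Icc 0 1) ⊗ₘ bandKernel n rev

def bandGraph (n : ℕ) (rev : Fin n → Bool) : Set (ℝ × ℝ) :=
  {p | p.1 ∈ Ioo 0 1 ∧ p.2 ∈ bandValues n rev p.1}

section bandPermuton

variable {n : ℕ} (rev : Fin n → Bool)

lemma measurableSet_bandGraph : MeasurableSet (bandGraph n rev) := by
  have : bandGraph n rev =
      Prod.fst ⁻¹' Ioo 0 1 ∩ ⋃ j : Fin n, {p | bandLine n j (rev j) p.1 = p.2} := by
    ext p
    simp [bandGraph, bandValues]
  rw [this]
  exact (measurable_fst measurableSet_Ioo).inter (MeasurableSet.iUnion fun j =>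
    measurableSet_eq_fun ((continuous_bandLine _ _).measurable.comp measurable_fst) measurable_snd)

lemma ae_bandPermuton_mem_bandGraph : ∀ᵐ p ∂bandPermuton n rev, p ∈ bandGraph n rev := by
  refine Measure.ae_compProd_of_ae_ae (measurableSet_bandGraph rev) ?_
  filter_upwards [ae_restrict_Icc_mem_Ioo] with x hx
  filter_upwards [measure_eq_zero_iff_ae_notMem.1 (bandFiber_compl_bandValues rev x)] with y hy
  exact ⟨hx, not_not.1 hy⟩

variable [NeZero n]

instance : IsProbabilityMeasure (bandPermuton n rev) := by
  unfold bandPermuton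
  infer_instance

lemma bandPermuton_apply {s : Set (ℝ × ℝ)} (hs : MeasurableSet s) :
    bandPermuton n rev s = ∫⁻ x in Icc 0 1, bandFiber n rev x (Prod.mk x ⁻¹' s) :=
  Measure.compProd_apply hs

lemma bandPermuton_prod_univ {s : Set ℝ} (hs : MeasurableSet s) :
    bandPermuton n rev (s ×ˢ univ) = volume (s ∩ Icc 0 1) := by
  rw [bandPermuton, Measure.compProd_apply_prod hs MeasurableSet.univ]
  simp [Measure.restrict_apply hs]

lemma bandPermuton_univ_prod {s : Set ℝ} (hs : MeasurableSet s) :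
    bandPermuton n rev (univ ×ˢ s) = volume (s ∩ Icc 0 1) := by
  rw [bandPermuton, Measure.compProd_apply_prod MeasurableSet.univ hs, Measure.restrict_univ,
    ← Measure.restrict_congr_set Ioo_ae_eq_Icc]
  exact setLIntegral_bandFiber_Ioo rev hs

end bandPermuton

def patternOrientation {n : ℕ} (A : Equiv.Perm (Fin (n + 1))) (j : Fin n) : Bool :=
  decide (A.symm j.castSucc < A.symm j.succ)

section patternOrientation

variable {n : ℕ} [NeZero n] (A : Equiv.Perm (Fin (n + 1)))

lemma notMem_patternSet_of_forall_mem_bandGraph {f : Fin (n + 1) → ℝ × ℝ}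
    (hf : ∀ i, f i ∈ bandGraph n (patternOrientation A)) : f ∉ patternSet A := by
  rintro ⟨hx, hy⟩
  choose J hJ using fun i => by simpa [bandValues] using (hf i).2
  have hJ_mono : Monotone fun v => J (A.symm v) := by
    intro v w hvw
    by_contra hlt
    have := bandLine_lt_bandLine (n := n) (Fin.lt_def.1 (not_le.1 hlt))
      (patternOrientation A (J (A.symm w))) (patternOrientation A (J (A.symm v)))
      (hf (A.symm w)).1 (hf (A.symm v)).1
    rw [hJ, hJ, ← hy, Equiv.apply_symm_apply, Equiv.apply_symm_apply] at this
    exact this.not_ge hvw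
  obtain ⟨u, hu, hu'⟩ := Fin.exists_castSucc_eq_succ_eq_of_monotone hJ_mono
  set i := A.symm u.castSucc
  set i' := A.symm u.succ
  have hlt : (f i).2 < (f i').2 := (hy i i').1 (by simp [i, i'])
  rw [← hJ i, ← hJ i'] at hlt
  simp only [hu, hu'] at hlt
  cases hr : patternOrientation A u
  · rw [hr] at hlt
    have hii' : ¬i < i' := by simpa [patternOrientation] using hr
    exact hii' (hx.lt_iff_lt.1 ((strictMono_bandLine_false u).lt_iff_lt.1 hlt))
  · rw [hr] at hlt
    have hii' : i < i' := by simpa [patternOrientation] using hr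
    exact (hx.lt_iff_lt.1 ((strictAnti_bandLine_true u).lt_iff_gt.1 hlt)).not_gt hii'

lemma pi_bandPermuton_patternSet :
    Measure.pi (fun _ : Fin (n + 1) => bandPermuton n (patternOrientation A)) (patternSet A) =
      0 := by
  rw [measure_eq_zero_iff_ae_notMem]
  have hgraph :
      ∀ᵐ f ∂Measure.pi (fun _ : Fin (n + 1) => bandPermuton n (patternOrientation A)),
        ∀ i, f i ∈ bandGraph n (patternOrientation A) :=
    Filter.eventually_all.2 fun _ => Measure.tendsto_eval_ae_ae.eventually
      (ae_bandPermuton_mem_bandGraph _)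
  filter_upwards [hgraph] with f hf using notMem_patternSet_of_forall_mem_bandGraph A hf

end patternOrientation

end

/-- For every pattern `A ∈ S(k)`, `k ≥ 2`, there is an `A`-avoiding
permuton whose fibers (for a disintegration along the first coordinate) are almost
all supported on exactly `k - 1` atoms. -/
theorem stmt9 (k : ℕ) (hk : 2 ≤ k) (A : Equiv.Perm (Fin k)) :
    ∃ Γ : Measure (ℝ × ℝ), IsProbabilityMeasure Γ ∧
      (∀ B : Set ℝ, MeasurableSet B →
        Γ (B ×ˢ univ) = volume (B ∩ Icc 0 1) ∧ Γ (univ ×ˢ B) = volume (B ∩ Icc 0 1)) ∧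
      Measure.pi (fun _ : Fin k => Γ) (patternSet A) = 0 ∧
      ∃ Γx : ℝ → Measure ℝ, Measurable Γx ∧
        (∀ B : Set (ℝ × ℝ), MeasurableSet B →
          Γ B = ∫⁻ x in Icc (0 : ℝ) 1, Γx x {y | (x, y) ∈ B}) ∧
        ∀ᵐ x ∂(volume.restrict (Icc (0 : ℝ) 1)),
          ∃ P : Finset ℝ, P.card = k - 1 ∧ Γx x ((↑P : Set ℝ)ᶜ) = 0 ∧
            ∀ p ∈ P, 0 < Γx x {p} := by
  obtain ⟨n, rfl⟩ : ∃ n, k = n + 1 := ⟨k - 1, by omega⟩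
  have : NeZero n := ⟨by omega⟩
  set rev := patternOrientation A
  refine ⟨bandPermuton n rev, inferInstance,
    fun B hB => ⟨bandPermuton_prod_univ rev hB, bandPermuton_univ_prod rev hB⟩,
    pi_bandPermuton_patternSet A, bandFiber n rev, measurable_bandFiber rev,
    fun B hB => bandPermuton_apply rev hB, ?_⟩
  filter_upwards [ae_restrict_Icc_mem_Ioo] with x hx
  exact ⟨bandValues n rev x, card_bandValues rev hx, bandFiber_compl_bandValues rev x,
    fun p hp => bandFiber_singleton_pos rev hp⟩
end

section
/- Let f : [0,1] → [0,1] be the map swapping digits 1 and 2 in the base-4 expansion. Then there do not exist x₁ < x₂ < x₃ < x₄ (with unique base-4 expansions) such that f(x₂) < f(x₄) < f(x₁) < f(x₃); i.e., the graph of f contains no occurrence of the pattern (3142). -/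
open MeasureTheory Set

/-- The digit substitution swapping 1 and 2, fixing 0 and 3. -/
def swapDigit : ℕ → ℕ
  | 1 => 2
  | 2 => 1
  | d => d

/-- The `n`-th digit (0-indexed) of `x` in base 4. -/
noncomputable def quatDigit (x : ℝ) (n : ℕ) : ℕ := (⌊x * 4 ^ (n + 1)⌋).toNat % 4

/-- The map swapping digits 1 and 2 in the base-4 expansion. -/
noncomputable def swapMap (x : ℝ) : ℝ :=
  ∑' n : ℕ, (swapDigit (quatDigit x n) : ℝ) / 4 ^ (n + 1)

/-!
If `x₁ < x₄` first differ in their `n`-th base-4 digit, then `x₂` and `x₃` share the first `n`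
digits with them, and the `n`-th digits satisfy `d₁ ≤ d₂ ≤ d₃ ≤ d₄` with `d₁ < d₄`. For points with
a common prefix, the order of their images is decided by the swapped `n`-th digits, because the
floor expansion never ends in a tail of 3s and the swap fixes 3. Among the quadruples of digits,
always `σ d₁ < σ d₄`, `σ d₄ < σ d₂` or `σ d₃ < σ d₁`: the pattern (3142) is avoided already on a
single digit.
-/

open Real

section Digits

variable {b : ℕ} [NeZero b]

lemma digits_val (x : ℝ) (n : ℕ) : (digits x b n : ℕ) = ⌊x * b ^ (n + 1)⌋₊ % b := by
  simp [digits]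

lemma floor_mul_pow_eq_div (x : ℝ) {k n : ℕ} (h : k ≤ n) :
    ⌊x * b ^ k⌋₊ = ⌊x * b ^ n⌋₊ / b ^ (n - k) := by
  obtain ⟨m, rfl⟩ := Nat.exists_eq_add_of_le h
  have hb : (b : ℝ) ≠ 0 := Nat.cast_ne_zero.2 (NeZero.ne b)
  rw [← Nat.floor_div_natCast, Nat.add_sub_cancel_left]
  congr 1
  push_cast
  field_simp
  ring

lemma floor_mul_pow_succ (x : ℝ) (n : ℕ) :
    ⌊x * b ^ (n + 1)⌋₊ = b * ⌊x * b ^ n⌋₊ + digits x b n := by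
  rw [digits_val, floor_mul_pow_eq_div x (by omega : n ≤ n + 1), Nat.add_sub_cancel_left, pow_one,
    Nat.div_add_mod]

lemma digits_eq_of_floor_eq {x y : ℝ} {n : ℕ} (h : ⌊x * b ^ n⌋₊ = ⌊y * b ^ n⌋₊) {i : ℕ}
    (hi : i < n) : digits x b i = digits y b i := by
  apply Fin.ext
  rw [digits_val, digits_val, floor_mul_pow_eq_div x hi, floor_mul_pow_eq_div y hi, h]

lemma digits_le_of_floor_eq {x y : ℝ} (hxy : x ≤ y) {n : ℕ}
    (h : ⌊x * b ^ n⌋₊ = ⌊y * b ^ n⌋₊) : digits x b n ≤ digits y b n := by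
  have hle : ⌊x * b ^ (n + 1)⌋₊ ≤ ⌊y * b ^ (n + 1)⌋₊ :=
    Nat.floor_le_floor (mul_le_mul_of_nonneg_right hxy (by positivity))
  rw [floor_mul_pow_succ, floor_mul_pow_succ, h] at hle
  exact Fin.le_def.2 (by omega)

lemma exists_floor_eq_digits_lt (hb : 1 < b) {x y : ℝ} (hx : 0 ≤ x) (hxy : x < y)
    (h0 : ⌊x⌋₊ = ⌊y⌋₊) : ∃ n, ⌊x * b ^ n⌋₊ = ⌊y * b ^ n⌋₊ ∧ digits x b n < digits y b n := by
  by_contra! hcon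
  have hall : ∀ n, ⌊x * b ^ n⌋₊ = ⌊y * b ^ n⌋₊ := by
    intro n
    induction n with
    | zero => simpa using h0
    | succ n ih =>
      rw [floor_mul_pow_succ, floor_mul_pow_succ, ih,
        (digits_le_of_floor_eq hxy.le ih).antisymm (hcon n ih)]
  obtain ⟨n, hn⟩ := pow_unbounded_of_one_lt (y - x)⁻¹ (Nat.one_lt_cast.2 hb : (1 : ℝ) < b)
  have hgap : x * b ^ n + 1 ≤ y * b ^ n := by
    rw [inv_lt_iff_one_lt_mul₀ (sub_pos.2 hxy)] at hn
    linarith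
  have hfloor := Nat.floor_le_floor hgap
  rw [Nat.floor_add_one (by positivity), hall n] at hfloor
  omega

lemma exists_digits_lt_pred (hb : 1 < b) {x : ℝ} (hx : 0 ≤ x) (n : ℕ) :
    ∃ k, n < k ∧ (digits x b k : ℕ) < b - 1 := by
  by_contra! hcon
  set q := ⌊x * b ^ (n + 1)⌋₊
  -- a tail of `b - 1`s would squeeze `x * b ^ (n + 1)` up against the integer `q + 1`
  have hgrow : ∀ m, ⌊x * b ^ (n + 1 + m)⌋₊ + 1 = b ^ m * (q + 1) := by
    intro m
    induction m with
    | zero => simp [q]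
    | succ m ih =>
      have hd : (digits x b (n + 1 + m) : ℕ) = b - 1 :=
        le_antisymm (Nat.le_sub_one_of_lt (Fin.is_lt _)) (hcon _ (by omega))
      rw [← add_assoc, floor_mul_pow_succ, hd, pow_succ, mul_comm _ b, mul_assoc, ← ih, mul_add,
        mul_one]
      omega
  have hε : 0 < (q + 1) - x * b ^ (n + 1) := sub_pos.2 (Nat.lt_floor_add_one _)
  obtain ⟨m, hm⟩ := pow_unbounded_of_one_lt ((q + 1) - x * b ^ (n + 1))⁻¹ (Nat.one_lt_cast.2 hb : (1 : ℝ) < b)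
  have hle : (b : ℝ) ^ m * (q + 1) - 1 ≤ x * b ^ (n + 1) * b ^ m := by
    have hgrow_m := congrArg (Nat.cast (R := ℝ)) (hgrow m)
    push_cast at hgrow_m
    calc (b : ℝ) ^ m * (q + 1) - 1 = ⌊x * b ^ (n + 1 + m)⌋₊ := by linarith
      _ ≤ x * b ^ (n + 1 + m) := Nat.floor_le (by positivity)
      _ = x * b ^ (n + 1) * b ^ m := by ring
  rw [inv_lt_iff_one_lt_mul₀ hε] at hm
  nlinarith

end Digits

section OfDigits

variable {b : ℕ}

lemma ofDigits_lt_one (hb : 1 < b) {d : ℕ → Fin b} {k : ℕ} (hk : (d k : ℕ) < b - 1) :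
    ofDigits d < 1 := by
  rw [← ofDigits_const_last_eq_one' hb]
  refine Summable.tsum_lt_tsum (i := k) (fun i => ?_) ?_ summable_ofDigitsTerm
    summable_ofDigitsTerm
  · unfold ofDigitsTerm
    gcongr
    exact_mod_cast Nat.le_sub_one_of_lt (d i).is_lt
  · unfold ofDigitsTerm
    gcongr

lemma ofDigits_lt_ofDigits (hb : 1 < b) {d e : ℕ → Fin b} {n k : ℕ}
    (heq : ∀ i < n, d i = e i) (hlt : d n < e n) (hnk : n < k) (hk : (d k : ℕ) < b - 1) :
    ofDigits d < ofDigits e := by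
  have hprefix : ∑ i ∈ Finset.range n, ofDigitsTerm d i = ∑ i ∈ Finset.range n, ofDigitsTerm e i :=
    Finset.sum_congr rfl fun i hi => by simp only [ofDigitsTerm, heq i (Finset.mem_range.1 hi)]
  rw [ofDigits_eq_sum_add_ofDigits d (n + 1), ofDigits_eq_sum_add_ofDigits e (n + 1),
    Finset.sum_range_succ, Finset.sum_range_succ, hprefix]
  have htail_d : ofDigits (fun i => d (i + (n + 1))) < 1 :=
    ofDigits_lt_one hb (k := k - (n + 1)) (by rwa [Nat.sub_add_cancel hnk])
  have htail_e := ofDigits_nonneg (fun i => e (i + (n + 1)))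
  have hc : (0 : ℝ) < ((b : ℝ) ^ (n + 1))⁻¹ := by
    have : 0 < b := by omega
    positivity
  have hde : (d n : ℝ) + 1 ≤ e n := by exact_mod_cast Fin.lt_def.1 hlt
  unfold ofDigitsTerm
  nlinarith [mul_lt_mul_of_pos_left htail_d hc, mul_nonneg hc.le htail_e]

end OfDigits

lemma quatDigit_eq_digits (x : ℝ) (n : ℕ) : quatDigit x n = digits x 4 n := by
  rw [digits_val, quatDigit, Int.floor_toNat]
  norm_num

lemma swapDigit_val (d : Fin 4) : swapDigit d = (Equiv.swap 1 2 d : Fin 4) := by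
  fin_cases d <;> rfl

lemma swapMap_eq_ofDigits (x : ℝ) : swapMap x = ofDigits (Equiv.swap 1 2 ∘ digits x 4) := by
  unfold swapMap ofDigits ofDigitsTerm
  congr 1
  ext n
  simp [quatDigit_eq_digits, swapDigit_val, div_eq_mul_inv]

lemma swapMap_lt_swapMap {x y : ℝ} (hx : 0 ≤ x) {n : ℕ}
    (h : ⌊x * (4 : ℕ) ^ n⌋₊ = ⌊y * (4 : ℕ) ^ n⌋₊)
    (hlt : Equiv.swap 1 2 (digits x 4 n) < Equiv.swap (1 : Fin 4) 2 (digits y 4 n)) :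
    swapMap x < swapMap y := by
  obtain ⟨k, hnk, hk⟩ := exists_digits_lt_pred (b := 4) (by norm_num) hx n
  rw [swapMap_eq_ofDigits, swapMap_eq_ofDigits]
  refine ofDigits_lt_ofDigits (by norm_num) (fun i hi => ?_) hlt hnk ?_
  · simp [digits_eq_of_floor_eq h hi]
  · have swap_fixes_three : ∀ d : Fin 4, (d : ℕ) < 3 → ((Equiv.swap 1 2 d : Fin 4) : ℕ) < 3 := by
      decide
    exact swap_fixes_three _ hk

lemma swap_one_two_avoids_3142 (a b c d : Fin 4) (hab : a ≤ b) (hbc : b ≤ c) (hcd : c ≤ d)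
    (had : a < d) :
    Equiv.swap 1 2 a < Equiv.swap (1 : Fin 4) 2 d ∨ Equiv.swap 1 2 d < Equiv.swap (1 : Fin 4) 2 b ∨
      Equiv.swap 1 2 c < Equiv.swap (1 : Fin 4) 2 a := by
  revert a b c d
  decide

/-- The graph of the digit-swapping map contains no occurrence of the
pattern (3142): there are no `x₁ < x₂ < x₃ < x₄` in `[0,1]` with unique base-4
expansions such that `f(x₂) < f(x₄) < f(x₁) < f(x₃)`. -/
theorem stmt11 (x₁ x₂ x₃ x₄ : ℝ)
    (hmem : ∀ x ∈ ({x₁, x₂, x₃, x₄} : Set ℝ), x ∈ Icc (0 : ℝ) 1)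
    (huniq : ∀ x ∈ ({x₁, x₂, x₃, x₄} : Set ℝ), ∀ (m : ℕ) (j : ℤ), x ≠ (j : ℝ) / 4 ^ m)
    (h12 : x₁ < x₂) (h23 : x₂ < x₃) (h34 : x₃ < x₄)
    (hf24 : swapMap x₂ < swapMap x₄) (hf41 : swapMap x₄ < swapMap x₁)
    (hf13 : swapMap x₁ < swapMap x₃) : False := by
  have hx₁ : 0 ≤ x₁ := (hmem x₁ (by simp)).1
  have hx₃ : 0 ≤ x₃ := hx₁.trans (h12.trans h23).le
  have hx₄ : x₄ < 1 := (hmem x₄ (by simp)).2.lt_of_ne (by simpa using huniq x₄ (by simp) 0 1)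
  obtain ⟨n, hn, hd₁₄⟩ := exists_floor_eq_digits_lt (b := 4) (by norm_num) hx₁
    (h12.trans (h23.trans h34))
    (by rw [Nat.floor_eq_zero.2 (by linarith), Nat.floor_eq_zero.2 hx₄])
  have hmono {x y : ℝ} (h : x ≤ y) : ⌊x * (4 : ℕ) ^ n⌋₊ ≤ ⌊y * (4 : ℕ) ^ n⌋₊ :=
    Nat.floor_le_floor (mul_le_mul_of_nonneg_right h (by positivity))
  have hn₁₂ := (hmono h12.le).antisymm ((hmono (h23.trans h34).le).trans hn.ge)
  have hn₂₃ := (hmono h23.le).antisymm ((hmono h34.le).trans (hn.ge.trans (hmono h12.le)))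
  have hn₃₄ := (hmono h34.le).antisymm (hn.ge.trans (hmono (h12.trans h23).le))
  rcases swap_one_two_avoids_3142 _ _ _ _ (digits_le_of_floor_eq h12.le hn₁₂)
    (digits_le_of_floor_eq h23.le hn₂₃) (digits_le_of_floor_eq h34.le hn₃₄) hd₁₄ with h | h | h
  · exact hf41.not_gt (swapMap_lt_swapMap hx₁ hn h)
  · exact hf24.not_gt (swapMap_lt_swapMap (hx₃.trans h34.le) (hn₂₃.trans hn₃₄).symm h)
  · exact hf13.not_gt (swapMap_lt_swapMap hx₃ (hn₁₂.trans hn₂₃).symm h)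
end

section
/- Let f : [0,1] → [0,1] be the map swapping digits 1 and 2 in the base-4 expansion. Then the restriction of f to any measurable set S ⊆ [0,1] of positive Lebesgue measure is not differentiable on S; more precisely, for every x ∈ S that is a Lebesgue density point of S and every real c, there exist points y ∈ S arbitrarily close to x with |(f(x)−f(y))/(x−y) − c| ≥ 1/2. -/
open MeasureTheory Set Filter

/-! At a density point `x`, fix a scale `4⁻ⁿ`. Replacing the `n`-th digit `d` of `x` by a digit
`d'` with `1 ≤ |d' - d| ≤ 2` gives a point `z` with
`(f x - f z) / (x - z) = (σ d' - σ d) / (d' - d)`, and every digit has such a neighbour of slope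
`2` and one of slope `1/2`; take the one whose slope is at least `3/4` away from `c`. The
generation-`(n+3)` cell containing `z` carries `1/128` of the measure of `[x - 4⁻ⁿ, x + 4⁻ⁿ]`, so
by density it meets `S`; on that cell both the argument and the value of `f` move by at most
`4⁻⁽ⁿ⁺³⁾`, which moves the slope seen from `x` by at most `1/5`. -/

open Topology

lemma quatDigit_lt (x : ℝ) (n : ℕ) : quatDigit x n < 4 := Nat.mod_lt _ (by norm_num)

lemma natCast_quatDigit {x : ℝ} (hx : 0 ≤ x) (n : ℕ) :
    (quatDigit x n : ℤ) = ⌊x * 4 ^ (n + 1)⌋ % 4 := by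
  have : 0 ≤ ⌊x * 4 ^ (n + 1)⌋ := Int.floor_nonneg.mpr (by positivity)
  unfold quatDigit
  omega

lemma floor_mul_four_pow_eq_ediv (x : ℝ) (j l : ℕ) :
    ⌊x * 4 ^ j⌋ = ⌊x * 4 ^ (j + l)⌋ / 4 ^ l := by
  have h := Int.floor_div_natCast (x * 4 ^ j * 4 ^ l) (4 ^ l)
  push_cast at h
  rwa [mul_div_cancel_right₀ _ (by positivity), mul_assoc, ← pow_add] at h

lemma quatDigit_eq_of_floor_eq {y z : ℝ} {m k : ℕ} (h : ⌊y * 4 ^ m⌋ = ⌊z * 4 ^ m⌋) (hk : k < m) :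
    quatDigit y k = quatDigit z k := by
  have hm : m = k + 1 + (m - (k + 1)) := by omega
  unfold quatDigit
  rw [floor_mul_four_pow_eq_ediv y (k + 1) (m - (k + 1)),
    floor_mul_four_pow_eq_ediv z (k + 1) (m - (k + 1)), ← hm, h]

noncomputable def replaceDigit (x : ℝ) (n d : ℕ) : ℝ :=
  x + ((d : ℝ) - quatDigit x n) / 4 ^ (n + 1)

lemma floor_replaceDigit_mul (x : ℝ) (n d : ℕ) {k : ℕ} (hk : n ≤ k) :
    ⌊replaceDigit x n d * 4 ^ (k + 1)⌋
      = ⌊x * 4 ^ (k + 1)⌋ + ((d : ℤ) - quatDigit x n) * 4 ^ (k - n) := by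
  have hpow : (4 : ℝ) ^ (k + 1) = 4 ^ (n + 1) * 4 ^ (k - n) := by
    rw [← pow_add]; congr 1; omega
  have : replaceDigit x n d * 4 ^ (k + 1)
      = x * 4 ^ (k + 1) + (((d : ℤ) - quatDigit x n) * 4 ^ (k - n) : ℤ) := by
    rw [replaceDigit, hpow]; push_cast; field_simp
  rw [this, Int.floor_add_intCast]

lemma floor_replaceDigit_mul_self {x : ℝ} (hx : 0 ≤ x) (n d : ℕ) :
    ⌊replaceDigit x n d * 4 ^ (n + 1)⌋ = ⌊x * 4 ^ (n + 1)⌋ / 4 * 4 + d := by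
  rw [floor_replaceDigit_mul x n d le_rfl, natCast_quatDigit hx, Nat.sub_self, pow_zero]
  omega

lemma replaceDigit_nonneg {x : ℝ} (hx : 0 ≤ x) (n : ℕ) {d : ℕ} (hd : d < 4) :
    0 ≤ replaceDigit x n d := by
  have h := floor_replaceDigit_mul_self hx n d
  have : 0 ≤ ⌊x * 4 ^ (n + 1)⌋ := Int.floor_nonneg.mpr (by positivity)
  have : 0 ≤ ⌊replaceDigit x n d * 4 ^ (n + 1)⌋ := by omega
  exact nonneg_of_mul_nonneg_left (Int.floor_nonneg.mp this) (by positivity)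

lemma quatDigit_replaceDigit_self {x : ℝ} (hx : 0 ≤ x) (n : ℕ) {d : ℕ} (hd : d < 4) :
    quatDigit (replaceDigit x n d) n = d := by
  have h := natCast_quatDigit (replaceDigit_nonneg hx n hd) n
  rw [floor_replaceDigit_mul_self hx n d] at h
  omega

lemma quatDigit_replaceDigit_of_ne {x : ℝ} (hx : 0 ≤ x) (n : ℕ) {d : ℕ} (hd : d < 4) {k : ℕ}
    (hk : k ≠ n) : quatDigit (replaceDigit x n d) k = quatDigit x k := by
  rcases hk.lt_or_gt with hlt | hgt
  · -- below position `n` both points lie in the same cell of generation `n`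
    refine quatDigit_eq_of_floor_eq ?_ hlt
    rw [floor_mul_four_pow_eq_ediv _ n 1, floor_mul_four_pow_eq_ediv x n 1,
      floor_replaceDigit_mul_self hx n d]
    omega
  · have h := natCast_quatDigit (replaceDigit_nonneg hx n hd) k
    rw [floor_replaceDigit_mul x n d hgt.le, show k - n = k - n - 1 + 1 by omega,
      pow_succ _ (k - n - 1), ← mul_assoc, Int.add_mul_emod_self_right, ← natCast_quatDigit hx] at h
    exact_mod_cast h

lemma swapDigit_le_three : ∀ d : ℕ, d < 4 → swapDigit d ≤ 3 := by
  decide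

lemma swapMap_term_le (x : ℝ) (k : ℕ) :
    (swapDigit (quatDigit x k) : ℝ) / 4 ^ (k + 1) ≤ 3 / 4 ^ (k + 1) := by
  gcongr
  exact_mod_cast swapDigit_le_three _ (quatDigit_lt x k)

lemma hasSum_three_div_four_pow (m : ℕ) :
    HasSum (fun k : ℕ => (3 : ℝ) / 4 ^ (k + m + 1)) (1 / 4 ^ m) := by
  have hterm : (fun k : ℕ => (3 : ℝ) / 4 ^ (k + m + 1))
      = fun k => 3 / 4 ^ (m + 1) * (1 / 4) ^ k := by
    ext k
    rw [div_pow, one_pow, show k + m + 1 = k + (m + 1) by ring, pow_add]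
    field_simp
  have hsum : (1 : ℝ) / 4 ^ m = 3 / 4 ^ (m + 1) * (1 - 1 / 4)⁻¹ := by
    rw [pow_succ]
    field_simp
    norm_num
  rw [hterm, hsum]
  exact (hasSum_geometric_of_lt_one (by norm_num) (by norm_num)).mul_left _

lemma summable_swapMap_term (x : ℝ) :
    Summable (fun k : ℕ => (swapDigit (quatDigit x k) : ℝ) / 4 ^ (k + 1)) :=
  (hasSum_three_div_four_pow 0).summable.of_nonneg_of_le (fun _ => by positivity)
    (swapMap_term_le x)

lemma swapMap_sub_of_quatDigit_eq_of_ne {x z : ℝ} {n : ℕ}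
    (h : ∀ k, k ≠ n → quatDigit x k = quatDigit z k) :
    swapMap x - swapMap z
      = ((swapDigit (quatDigit x n) : ℝ) - swapDigit (quatDigit z n)) / 4 ^ (n + 1) := by
  rw [swapMap, swapMap, ← (summable_swapMap_term x).tsum_sub (summable_swapMap_term z),
    tsum_eq_single n fun k hk => by rw [h k hk, sub_self], sub_div]

lemma swapMap_sub_swapMap_replaceDigit {x : ℝ} (hx : 0 ≤ x) (n : ℕ) {d : ℕ} (hd : d < 4) :
    swapMap x - swapMap (replaceDigit x n d)
      = ((swapDigit (quatDigit x n) : ℝ) - swapDigit d) / 4 ^ (n + 1) := by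
  rw [swapMap_sub_of_quatDigit_eq_of_ne fun k hk => (quatDigit_replaceDigit_of_ne hx n hd hk).symm,
    quatDigit_replaceDigit_self hx n hd]

lemma abs_swapMap_sub_le {y z : ℝ} {m : ℕ} (h : ∀ k < m, quatDigit y k = quatDigit z k) :
    |swapMap y - swapMap z| ≤ 1 / 4 ^ m := by
  rw [← Real.norm_eq_abs, swapMap, swapMap,
    ← (summable_swapMap_term y).tsum_sub (summable_swapMap_term z),
    ← ((summable_swapMap_term y).sub (summable_swapMap_term z)).sum_add_tsum_nat_add m,
    Finset.sum_eq_zero fun k hk => by rw [h k (Finset.mem_range.mp hk), sub_self], zero_add]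
  refine tsum_of_norm_bounded (hasSum_three_div_four_pow m) fun k => ?_
  exact abs_sub_le_of_nonneg_of_le (by positivity) (swapMap_term_le y _) (by positivity)
    (swapMap_term_le z _)

lemma exists_swapDigit_slope_two :
    ∀ d : ℕ, d < 4 → ∃ d' : ℕ, d' < 4 ∧ |(d' : ℤ) - d| = 1 ∧
      (swapDigit d' : ℤ) - swapDigit d = 2 * ((d' : ℤ) - d) := by
  decide

lemma exists_swapDigit_slope_half :
    ∀ d : ℕ, d < 4 → ∃ d' : ℕ, d' < 4 ∧ |(d' : ℤ) - d| = 2 ∧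
      2 * ((swapDigit d' : ℤ) - swapDigit d) = (d' : ℤ) - d := by
  decide

lemma exists_swapDigit_slope_far {d : ℕ} (hd : d < 4) (c : ℝ) :
    ∃ d' : ℕ, d' < 4 ∧ ∃ q : ℝ, |q| ≤ 2 ∧ 3 / 4 ≤ |q - c| ∧
      1 ≤ |(d' : ℝ) - d| ∧ |(d' : ℝ) - d| ≤ 2 ∧
      (swapDigit d' : ℝ) - swapDigit d = q * ((d' : ℝ) - d) := by
  rcases le_or_gt c (5 / 4) with hc | hc
  · obtain ⟨d', hd', hdist, hslope⟩ := exists_swapDigit_slope_two d hd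
    have hdist' : |(d' : ℝ) - d| = 1 := by exact_mod_cast hdist
    refine ⟨d', hd', 2, by norm_num, ?_, hdist'.ge, by linarith, by exact_mod_cast hslope⟩
    rw [abs_of_nonneg (by linarith)]
    linarith
  · obtain ⟨d', hd', hdist, hslope⟩ := exists_swapDigit_slope_half d hd
    have hdist' : |(d' : ℝ) - d| = 2 := by exact_mod_cast hdist
    have hslope' : 2 * ((swapDigit d' : ℝ) - swapDigit d) = (d' : ℝ) - d := by
      exact_mod_cast hslope
    refine ⟨d', hd', 1 / 2, by norm_num [abs_of_pos], ?_, by linarith, hdist'.le, by linarith⟩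
    rw [abs_sub_comm, abs_of_nonneg (by linarith)]
    linarith

lemma le_abs_slope_sub_of_near {x y z fx fy fz q c t : ℝ} (ht : 0 < t) (hxz : 16 * t ≤ |x - z|)
    (hyz : |y - z| ≤ t) (hf : |fy - fz| ≤ t) (hslope : fx - fz = q * (x - z)) (hq : |q| ≤ 2)
    (hqc : 3 / 4 ≤ |q - c|) :
    x ≠ y ∧ 1 / 2 ≤ |(fx - fy) / (x - y) - c| := by
  have hxy : 15 * t ≤ |x - y| := by linarith [abs_sub_le x y z]
  have hxy0 : 0 < |x - y| := by linarith
  have hnum : |(fx - fy) - q * (x - y)| ≤ 3 * t :=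
    calc |(fx - fy) - q * (x - y)| = |(fz - fy) + q * (y - z)| := by
          congr 1; linear_combination hslope
      _ ≤ |fy - fz| + |q| * |y - z| := by rw [← abs_mul, abs_sub_comm fy]; exact abs_add_le _ _
      _ ≤ t + 2 * t := by gcongr
      _ = 3 * t := by ring
  have hclose : |(fx - fy) / (x - y) - q| ≤ 1 / 5 := by
    have hsub : (fx - fy) / (x - y) - q = ((fx - fy) - q * (x - y)) / (x - y) := by
      field_simp [abs_pos.mp hxy0]
    rw [hsub, abs_div, div_le_iff₀ hxy0]
    linarith
  refine ⟨fun h => by simp [h] at hxy0, ?_⟩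
  linarith [abs_sub_le q ((fx - fy) / (x - y)) c, abs_sub_comm q ((fx - fy) / (x - y))]

lemma eventually_nonempty_inter_of_tendsto_density {S : Set ℝ} {x : ℝ}
    (h : Tendsto (fun r : ℝ => volume (S ∩ Icc (x - r) (x + r)) / volume (Icc (x - r) (x + r)))
      (𝓝[>] 0) (𝓝 1))
    {κ : ℝ} (hκ : 0 < κ) :
    ∀ᶠ r in 𝓝[>] 0, ∀ J ⊆ Icc (x - r) (x + r), MeasurableSet J →
      ENNReal.ofReal (κ * r) ≤ volume J → (S ∩ J).Nonempty := by
  filter_upwards [h.eventually (eventually_gt_nhds (ENNReal.ofReal_lt_one.mpr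
    (by linarith : 1 - κ / 2 < 1))), self_mem_nhdsWithin] with r hr hr0 J hJ hJm hJvol
  have hI : volume (Icc (x - r) (x + r)) = ENNReal.ofReal (2 * r) := by
    rw [Real.volume_Icc]; ring_nf
  have hSI : ENNReal.ofReal ((1 - κ / 2) * (2 * r)) < volume (S ∩ Icc (x - r) (x + r)) := by
    rw [ENNReal.ofReal_mul' (by linarith [mem_Ioi.mp hr0]), ← hI]
    exact ENNReal.mul_lt_of_lt_div hr
  obtain ⟨y, ⟨hyS, -⟩, hyJ⟩ :=
    nonempty_inter_of_measure_lt_add volume hJm inter_subset_right hJ <|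
      calc volume (Icc (x - r) (x + r))
          = ENNReal.ofReal ((1 - κ / 2) * (2 * r) + κ * r) := by rw [hI]; ring_nf
        _ ≤ ENNReal.ofReal ((1 - κ / 2) * (2 * r)) + ENNReal.ofReal (κ * r) :=
          ENNReal.ofReal_add_le
        _ < volume (S ∩ Icc (x - r) (x + r)) + volume J :=
          ENNReal.add_lt_add_of_lt_of_le ENNReal.ofReal_ne_top hSI hJvol
  exact ⟨y, hyS, hyJ⟩

lemma floor_mul_eq_iff_mem_Ico {p : ℝ} (hp : 0 < p) (y : ℝ) (B : ℤ) :
    ⌊y * p⌋ = B ↔ y ∈ Ico (B / p) (B / p + 1 / p) := by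
  rw [Int.floor_eq_iff, mem_Ico, div_le_iff₀ hp, ← add_div, lt_div_iff₀ hp]

noncomputable def quatCell (z : ℝ) (m : ℕ) : Set ℝ :=
  Ico (⌊z * 4 ^ m⌋ / 4 ^ m) (⌊z * 4 ^ m⌋ / 4 ^ m + 1 / 4 ^ m)

lemma mem_quatCell_self (z : ℝ) (m : ℕ) : z ∈ quatCell z m :=
  (floor_mul_eq_iff_mem_Ico (by positivity) z _).mp rfl

lemma floor_mul_eq_of_mem_quatCell {y z : ℝ} {m : ℕ} (hy : y ∈ quatCell z m) :
    ⌊y * 4 ^ m⌋ = ⌊z * 4 ^ m⌋ :=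
  (floor_mul_eq_iff_mem_Ico (by positivity) y _).mpr hy

lemma abs_sub_le_of_mem_quatCell {y z : ℝ} {m : ℕ} (hy : y ∈ quatCell z m) :
    |y - z| ≤ 1 / 4 ^ m := by
  have hz := mem_quatCell_self z m
  exact abs_sub_le_iff.mpr ⟨by linarith [hy.2, hz.1], by linarith [hy.1, hz.2]⟩

lemma abs_swapMap_sub_le_of_mem_quatCell {y z : ℝ} {m : ℕ} (hy : y ∈ quatCell z m) :
    |swapMap y - swapMap z| ≤ 1 / 4 ^ m :=
  abs_swapMap_sub_le fun _ hk => quatDigit_eq_of_floor_eq (floor_mul_eq_of_mem_quatCell hy) hk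

lemma volume_quatCell (z : ℝ) (m : ℕ) : volume (quatCell z m) = ENNReal.ofReal (1 / 4 ^ m) := by
  rw [quatCell, Real.volume_Ico, add_sub_cancel_left]

lemma exists_quatCell_subset_forall_slope_far {x : ℝ} (hx : 0 ≤ x) (n : ℕ) (c : ℝ) :
    ∃ z : ℝ, quatCell z (n + 3) ⊆ Icc (x - 1 / 4 ^ n) (x + 1 / 4 ^ n) ∧
      ∀ y ∈ quatCell z (n + 3), x ≠ y ∧ 1 / 2 ≤ |(swapMap x - swapMap y) / (x - y) - c| := by
  obtain ⟨d', hd', q, hq, hqc, hd1, hd2, hslope⟩ := exists_swapDigit_slope_far (quatDigit_lt x n) c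
  set z := replaceDigit x n d'
  set t : ℝ := 1 / 4 ^ (n + 3)
  have ht : 0 < t := by positivity
  have h16 : (1 : ℝ) / 4 ^ (n + 1) = 16 * t := by
    simp only [t, pow_add]; field_simp; norm_num
  have hzx : z - x = ((d' : ℝ) - quatDigit x n) * (16 * t) := by
    simp only [z, replaceDigit]; rw [← h16]; ring
  have hzx_abs : |z - x| = |(d' : ℝ) - quatDigit x n| * (16 * t) := by
    rw [hzx, abs_mul, abs_of_pos (by positivity : (0 : ℝ) < 16 * t)]
  have hxz : 16 * t ≤ |x - z| := by
    rw [abs_sub_comm, hzx_abs]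
    exact le_mul_of_one_le_left (by positivity) hd1
  have hfxz : swapMap x - swapMap z = q * (x - z) := by
    rw [swapMap_sub_swapMap_replaceDigit hx n hd', div_eq_mul_one_div, h16,
      show x - z = -(((d' : ℝ) - quatDigit x n) * (16 * t)) by linarith]
    linear_combination (-16 * t) * hslope
  refine ⟨z, fun y hy => ?_, fun y hy => le_abs_slope_sub_of_near ht hxz
    (abs_sub_le_of_mem_quatCell hy) (abs_swapMap_sub_le_of_mem_quatCell hy) hfxz hq hqc⟩
  have hr : 1 / 4 ^ n = 64 * t := by
    simp only [t, pow_add]; field_simp; norm_num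
  have hzx_le : |z - x| ≤ 2 * (16 * t) := hzx_abs ▸ mul_le_mul_of_nonneg_right hd2 (by positivity)
  have hyx : |y - x| ≤ 64 * t := by
    linarith [abs_sub_le y z x, abs_sub_le_of_mem_quatCell hy]
  rw [hr, mem_Icc]
  constructor <;> linarith [abs_sub_le_iff.mp hyx]

theorem stmt12_general (S : Set ℝ) (hSsub : S ⊆ Icc 0 1) (x : ℝ) (hxS : x ∈ S)
    (hdensity : Tendsto (fun r : ℝ => volume (S ∩ Icc (x - r) (x + r)) / volume (Icc (x - r) (x + r)))
      (nhdsWithin 0 (Ioi 0)) (nhds 1))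
    (c : ℝ) :
    ∀ ε > 0, ∃ y ∈ S, y ≠ x ∧ |y - x| < ε ∧
      (1 : ℝ) / 2 ≤ |(swapMap x - swapMap y) / (x - y) - c| := by
  intro ε hε
  have hgood : ∀ᶠ r in 𝓝[>] (0 : ℝ), (∀ J ⊆ Icc (x - r) (x + r), MeasurableSet J →
      ENNReal.ofReal (1 / 64 * r) ≤ volume J → (S ∩ J).Nonempty) ∧ r < ε :=
    (eventually_nonempty_inter_of_tendsto_density hdensity (by norm_num)).and
      (eventually_nhdsWithin_of_eventually_nhds (eventually_lt_nhds hε))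
  obtain ⟨n, hmeets, hnε⟩ := ((tendsto_pow_atTop_nhdsWithin_zero_of_lt_one
    (by norm_num : (0 : ℝ) < 1 / 4) (by norm_num)).eventually hgood).exists
  rw [one_div_pow] at hmeets hnε
  obtain ⟨z, hsub, hfar⟩ := exists_quatCell_subset_forall_slope_far (hSsub hxS).1 n c
  obtain ⟨y, hyS, hy⟩ := hmeets _ hsub measurableSet_Ico <| by
    rw [volume_quatCell, pow_add]
    norm_num [div_div, mul_comm]
  obtain ⟨hxy, hslope⟩ := hfar y hy
  have hyI := hsub hy
  exact ⟨y, hyS, hxy.symm, abs_sub_lt_iff.mpr ⟨by linarith [hyI.2], by linarith [hyI.1]⟩, hslope⟩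

/-- The digit-swapping map restricted to a set of positive measure is
nowhere differentiable: at every Lebesgue density point `x` of a measurable
`S ⊆ [0,1]` of positive measure and for every candidate derivative `c`, there are
points `y ∈ S` arbitrarily close to `x` with difference quotient at least `1/2`
away from `c`. -/
theorem stmt12 (S : Set ℝ) (hSm : MeasurableSet S) (hSsub : S ⊆ Icc 0 1)
    (hSpos : 0 < volume S) (x : ℝ) (hxS : x ∈ S)
    (hdensity : Tendsto (fun r : ℝ => volume (S ∩ Icc (x - r) (x + r)) / volume (Icc (x - r) (x + r)))
      (nhdsWithin 0 (Ioi 0)) (nhds 1))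
    (c : ℝ) :
    ∀ ε > 0, ∃ y ∈ S, y ≠ x ∧ |y - x| < ε ∧
      (1 : ℝ) / 2 ≤ |(swapMap x - swapMap y) / (x - y) - c| :=
  stmt12_general S hSsub x hxS hdensity c
end

section
/- Let A be a permutation of [k] and Γ an A-avoiding permuton with disintegration {Γ_x}. Then for λ^{⊗n}-almost every (x₁,…,x_n) ∈ [0,1]^n with x₁ < … < x_n, the following holds: if ỹ₁,…,ỹ_n ∈ [0,1] are pairwise distinct and Γ_{x_i}({ỹ_i}) > 0 for each i, then the permutation induced by the points (x_i, ỹ_i) avoids the pattern A. -/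
/-!
Replacing the fibres of infinite mass (an `m`-null set of them) by `0` turns the disintegration
into an s-finite kernel `κ` with `Γ = m ⊗ₘ κ`, `m` the uniform measure on `[0, 1]`. A property
holding `(ρ × (m ⊗ₘ κ))`-almost everywhere holds, for `(ρ × m)`-almost every `(w, x)`, at
`κ x`-almost every `y`, hence at every atom of `κ x`. Peeling off the coordinates of `Γ^{⊗k}` one
at a time turns "`Γ^{⊗k}`-almost every tuple avoids `A`" into "for `m^{⊗k}`-almost every `x`,
every choice of atoms `y i` of `κ (x i)` avoids `A`"; the coordinates already treated are carried
along in the parameter `ρ`, because an iterated almost-everywhere statement cannot be turned back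
into a product one without measurability of the exceptional set. Finally, `n`-tuples are handled
through their `k`-subtuples `x ∘ f`, each of which is again `m^{⊗k}`-distributed.
-/

open MeasureTheory Set

open ProbabilityTheory

namespace ProbabilityTheory.Kernel

variable {α β : Type*} [MeasurableSpace α] [MeasurableSpace β]

lemma isSFiniteKernel_of_isFiniteMeasure (κ : Kernel α β) [∀ a, IsFiniteMeasure (κ a)] :
    IsSFiniteKernel κ := by
  classical
  set level : α → ℕ := fun a => ⌈(κ a univ).toReal⌉₊
  have hlevel : ∀ n, MeasurableSet (level ⁻¹' {n}) := fun n =>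
    (κ.measurable_coe MeasurableSet.univ).ennreal_toReal.nat_ceil (measurableSet_singleton n)
  have hfin : ∀ n, IsFiniteKernel (piecewise (hlevel n) κ 0) := fun n =>
    ⟨⟨n, ENNReal.natCast_lt_top n, fun a => by
      rw [piecewise_apply]
      split_ifs with ha
      · rw [← ENNReal.ofReal_toReal (measure_ne_top _ _), ← ha]
        exact ENNReal.ofReal_le_of_le_toReal (by simpa using Nat.le_ceil _)
      · simp⟩⟩
  have hsum : κ = Kernel.sum fun n => piecewise (hlevel n) κ 0 := by
    ext a s hs
    rw [sum_apply' _ _ hs, tsum_eq_single (level a) fun n hn => ?_]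
    · simp [piecewise_apply]
    · simp [piecewise_apply, Ne.symm hn]
  rw [hsum]
  infer_instance

end ProbabilityTheory.Kernel

namespace MeasurableEquiv

variable (X Y : Type*) [MeasurableSpace X] [MeasurableSpace Y]

def prodPiFinSucc (k : ℕ) : X × (Fin (k + 1) → Y) ≃ᵐ (X × Y) × (Fin k → Y) :=
  (prodCongr (.refl X) (.piFinSuccAbove (fun _ => Y) 0)).trans prodAssoc.symm

variable {X Y}

@[simp]
lemma prodPiFinSucc_apply {k : ℕ} (q : X × (Fin (k + 1) → Y)) :
    prodPiFinSucc X Y k q = ((q.1, q.2 0), Fin.tail q.2) :=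
  rfl

@[simp]
lemma prodPiFinSucc_symm_apply {k : ℕ} (r : (X × Y) × (Fin k → Y)) :
    (prodPiFinSucc X Y k).symm r = (r.1.1, Fin.cons r.1.2 r.2) := by
  rw [symm_apply_eq, prodPiFinSucc_apply]
  simp

end MeasurableEquiv

namespace MeasureTheory

theorem Measure.exists_kernel_eq_compProd {α β : Type*} [MeasurableSpace α] [MeasurableSpace β]
    {Γ : Measure (α × β)} [IsFiniteMeasure Γ] {m : Measure α} [SFinite m]
    {Γx : α → Measure β} (hmeas : Measurable Γx)
    (hdis : ∀ B, MeasurableSet B → Γ B = ∫⁻ x, Γx x (Prod.mk x ⁻¹' B) ∂m) :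
    ∃ κ : Kernel α β, IsSFiniteKernel κ ∧ Γ = m ⊗ₘ κ ∧ ∀ᵐ x ∂m, κ x = Γx x := by
  have hfin : ∀ᵐ x ∂m, Γx x univ ≠ ⊤ := by
    refine (ae_lt_top (Measure.measurable_coe .univ |>.comp hmeas) ?_).mono fun x => ne_of_lt
    have hΓ := hdis univ .univ
    simp only [preimage_univ] at hΓ
    exact hΓ ▸ measure_ne_top Γ univ
  have hs : MeasurableSet {x | Γx x univ ≠ ⊤} :=
    (measurableSet_singleton ⊤).compl.preimage (Measure.measurable_coe .univ |>.comp hmeas)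
  let κ := Kernel.piecewise hs ⟨Γx, hmeas⟩ 0
  have hκfin : ∀ x, IsFiniteMeasure (κ x) := fun x => by
    by_cases hx : Γx x univ ≠ ⊤
    · simpa [κ, Kernel.piecewise_apply, hx] using ⟨hx.lt_top⟩
    · simp [κ, Kernel.piecewise_apply, hx]; infer_instance
  have hκ : ∀ᵐ x ∂m, κ x = Γx x := hfin.mono fun x hx => by simp [κ, Kernel.piecewise_apply, hx]
  have hκs := Kernel.isSFiniteKernel_of_isFiniteMeasure κ
  refine ⟨κ, hκs, Measure.ext fun B hB => ?_, hκ⟩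
  rw [hdis B hB, Measure.compProd_apply hB]
  exact lintegral_congr_ae (hκ.mono fun x hx => by dsimp only; rw [hx])

section Rearrangement

variable {X Y Z : Type*} [MeasurableSpace X] [MeasurableSpace Y] [MeasurableSpace Z]

lemma measurePreserving_prod_right_comm (μ : Measure X) (ν : Measure Y) (ξ : Measure Z)
    [SFinite μ] [SFinite ν] [SFinite ξ] :
    MeasurePreserving (fun r : (X × Y) × Z => ((r.1.1, r.2), r.1.2))
      ((μ.prod ν).prod ξ) ((μ.prod ξ).prod ν) :=
  (measurePreserving_prodAssoc μ ξ ν).symm MeasurableEquiv.prodAssoc |>.comp <|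
    ((MeasurePreserving.id μ).prod (Measure.measurePreserving_swap (μ := ν) (ν := ξ))).comp
      (measurePreserving_prodAssoc μ ν ξ)

lemma measurePreserving_prodPiFinSucc (μ : Measure X) [SFinite μ] (ν : Measure Y)
    [SigmaFinite ν] (k : ℕ) :
    MeasurePreserving (MeasurableEquiv.prodPiFinSucc X Y k)
      (μ.prod (Measure.pi fun _ => ν)) ((μ.prod ν).prod (Measure.pi fun _ => ν)) :=
  (measurePreserving_prodAssoc μ ν _).symm MeasurableEquiv.prodAssoc |>.comp <|
    (MeasurePreserving.id μ).prod (measurePreserving_piFinSuccAbove (fun _ => ν) 0)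

lemma measurePreserving_comp_of_injective {ι ι' : Type*} [Fintype ι] [Fintype ι']
    (μ : Measure X) [IsProbabilityMeasure μ] {f : ι' → ι} (hf : Function.Injective f) :
    MeasurePreserving (fun x : ι → X => x ∘ f) (Measure.pi fun _ => μ)
      (Measure.pi fun _ => μ) := by
  classical
  let _ : Fintype (range f) := Subtype.fintype _
  have h := ((measurePreserving_piCongrLeft (fun _ : range f => μ)
    (Equiv.ofInjective f hf)).symm _).comp <| measurePreserving_fst.comp <|
      measurePreserving_piEquivPiSubtypeProd (fun _ => μ) (· ∈ range f)
  convert h using 1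
  ext x i
  simp [MeasurableEquiv.piCongrLeft, Equiv.piCongrLeft]

lemma ae_forall_comp_injective {ι ι' : Type*} [Fintype ι] [Fintype ι'] (μ : Measure X)
    [IsProbabilityMeasure μ] {p : (ι' → X) → Prop} (h : ∀ᵐ x ∂Measure.pi fun _ => μ, p x) :
    ∀ᵐ x ∂Measure.pi fun _ : ι => μ, ∀ f : ι' → ι, Function.Injective f → p (x ∘ f) := by
  refine ae_all_iff.2 fun f => ?_
  by_cases hf : Function.Injective f
  · exact ((measurePreserving_comp_of_injective μ hf).quasiMeasurePreserving.ae h).mono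
      fun x hx _ => hx
  · exact .of_forall fun x hf' => absurd hf' hf

end Rearrangement

lemma of_ae_of_measure_singleton_pos {α : Type*} [MeasurableSpace α] {μ : Measure α}
    {p : α → Prop} (h : ∀ᵐ a ∂μ, p a) {a : α} (ha : 0 < μ {a}) : p a := by
  by_contra hpa
  exact ha.ne' (measure_mono_null (singleton_subset_iff.2 hpa) (ae_iff.1 h))

section Atoms

universe u

variable {α β W : Type u} [MeasurableSpace α] [MeasurableSpace β] [MeasurableSpace W]
  {m : Measure α} {κ : Kernel α β} [IsSFiniteKernel κ]

lemma Measure.prod_compProd (ρ : Measure W) [SFinite ρ] [SFinite m] :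
    ρ.prod (m ⊗ₘ κ) = ((ρ.prod m) ⊗ₘ κ.prodMkLeft W).map MeasurableEquiv.prodAssoc := by
  rw [← Measure.compProd_const, ← Measure.compProd_const, Measure.compProd_assoc']
  congr 1
  ext w s hs
  rw [Kernel.compProd_apply hs, Kernel.const_apply, Kernel.const_apply, Measure.compProd_apply hs]
  rfl

lemma ae_forall_atom_of_ae_prod_compProd (ρ : Measure W) [SFinite ρ] [SFinite m]
    {p : W × α × β → Prop} (h : ∀ᵐ q ∂ρ.prod (m ⊗ₘ κ), p q) :
    ∀ᵐ q ∂ρ.prod m, ∀ b, 0 < κ q.2 {b} → p (q.1, q.2, b) := by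
  rw [Measure.prod_compProd, MeasurableEquiv.prodAssoc.measurableEmbedding.ae_map_iff] at h
  filter_upwards [Measure.ae_ae_of_ae_compProd h] with q hq b hb
  exact of_ae_of_measure_singleton_pos hq hb

variable [SigmaFinite m] [SigmaFinite (m ⊗ₘ κ)]

theorem ae_forall_atom_of_ae_prod_pi (k : ℕ) (ρ : Measure W) [SFinite ρ]
    {p : W × (Fin k → α × β) → Prop}
    (h : ∀ᵐ q ∂ρ.prod (Measure.pi fun _ => m ⊗ₘ κ), p q) :
    ∀ᵐ q ∂ρ.prod (Measure.pi fun _ => m), ∀ y : Fin k → β, (∀ i, 0 < κ (q.2 i) {y i}) →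
      p (q.1, fun i => (q.2 i, y i)) := by
  induction k generalizing W with
  | zero =>
    rw [Measure.pi_of_empty, Measure.prod_dirac,
      (measurableEmbedding_prod_mk_right _).ae_map_iff] at h
    rw [Measure.pi_of_empty, Measure.prod_dirac,
      (measurableEmbedding_prod_mk_right _).ae_map_iff]
    filter_upwards [h] with w hw y _
    convert hw using 2
  | succ k ih =>
    have hsplit :=
      ((measurePreserving_prodPiFinSucc ρ (m ⊗ₘ κ) k).symm _).quasiMeasurePreserving.ae h
    have htail := (measurePreserving_prod_right_comm ρ _ _).quasiMeasurePreserving.ae (ih _ hsplit)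
    have hhead := ((measurePreserving_prod_right_comm ρ _ _).comp
      (measurePreserving_prodPiFinSucc ρ m k)).quasiMeasurePreserving.ae
        (ae_forall_atom_of_ae_prod_compProd _ htail)
    filter_upwards [hhead] with q hq y hy
    simp only [Function.comp_apply, MeasurableEquiv.prodPiFinSucc_apply,
      MeasurableEquiv.prodPiFinSucc_symm_apply] at hq
    rw [← Fin.cons_self_tail fun i => (q.2 i, y i)]
    exact hq (y 0) (hy 0) (Fin.tail y) (fun i => hy i.succ)

theorem ae_forall_atom_of_ae_pi {k : ℕ} {p : (Fin k → α × β) → Prop}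
    (h : ∀ᵐ z ∂Measure.pi fun _ => m ⊗ₘ κ, p z) :
    ∀ᵐ x ∂Measure.pi fun _ => m, ∀ y : Fin k → β, (∀ i, 0 < κ (x i) {y i}) →
      p fun i => (x i, y i) := by
  have h' := ae_forall_atom_of_ae_prod_pi k (Measure.dirac PUnit.unit) (p := fun q => p q.2)
    (Measure.quasiMeasurePreserving_snd.ae h)
  rwa [Measure.dirac_prod, (measurableEmbedding_prodMk_left _).ae_map_iff] at h'

end Atoms

end MeasureTheory

theorem stmt13_general (k : ℕ) (A : Equiv.Perm (Fin k)) (Γ : Measure (ℝ × ℝ))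
    [IsProbabilityMeasure Γ]
    (havoid : Measure.pi (fun _ : Fin k => Γ) (patternSet A) = 0)
    (Γx : ℝ → Measure ℝ) (hmeas : Measurable Γx)
    (hdis : ∀ B : Set (ℝ × ℝ), MeasurableSet B →
      Γ B = ∫⁻ x in Icc (0 : ℝ) 1, Γx x {y | (x, y) ∈ B})
    (n : ℕ) :
    ∀ᵐ x ∂(Measure.pi fun _ : Fin n => volume.restrict (Icc (0 : ℝ) 1)),
      StrictMono x →
        ∀ ty : Fin n → ℝ, Function.Injective ty → (∀ i, 0 < Γx (x i) {ty i}) →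
          ¬ ∃ f : Fin k → Fin n, StrictMono f ∧
              ∀ i j : Fin k, A i < A j ↔ ty (f i) < ty (f j) := by
  have : IsProbabilityMeasure (volume.restrict (Icc (0 : ℝ) 1)) := ⟨by simp⟩
  obtain ⟨κ, _, rfl, hκ⟩ := Measure.exists_kernel_eq_compProd hmeas hdis
  have hk := ae_forall_atom_of_ae_pi (measure_eq_zero_iff_ae_notMem.1 havoid)
  have hn := ae_forall_comp_injective _ hk (ι := Fin n)
  have hκn : ∀ᵐ x ∂Measure.pi fun _ : Fin n => volume.restrict (Icc (0 : ℝ) 1),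
      ∀ i, κ (x i) = Γx (x i) :=
    ae_all_iff.2 fun i => Measure.tendsto_eval_ae_ae.eventually (p := fun a => κ a = Γx a) hκ
  filter_upwards [hn, hκn] with x hx hxκ hmono ty _ hty ⟨f, hf, hA⟩
  exact hx f hf.injective (ty ∘ f) (fun i => hxκ (f i) ▸ hty (f i)) ⟨hmono.comp hf, hA⟩

/-- If `Γ` is an `A`-avoiding permuton with disintegration `{Γx x}`,
then for almost every `x₁ < … < x_n`, any choice of distinct atoms `ty_i` of the
fibers `Γ_{x_i}` induces an `A`-avoiding configuration. -/
theorem stmt13 (k : ℕ) (A : Equiv.Perm (Fin k)) (Γ : Measure (ℝ × ℝ))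
    [IsProbabilityMeasure Γ]
    (hmarg : ∀ B : Set ℝ, MeasurableSet B →
      Γ (B ×ˢ univ) = volume (B ∩ Icc 0 1) ∧ Γ (univ ×ˢ B) = volume (B ∩ Icc 0 1))
    (havoid : Measure.pi (fun _ : Fin k => Γ) (patternSet A) = 0)
    (Γx : ℝ → Measure ℝ) (hmeas : Measurable Γx)
    (hdis : ∀ B : Set (ℝ × ℝ), MeasurableSet B →
      Γ B = ∫⁻ x in Icc (0 : ℝ) 1, Γx x {y | (x, y) ∈ B})
    (n : ℕ) :
    ∀ᵐ x ∂(Measure.pi fun _ : Fin n => volume.restrict (Icc (0 : ℝ) 1)),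
      StrictMono x →
        ∀ ty : Fin n → ℝ, Function.Injective ty → (∀ i, 0 < Γx (x i) {ty i}) →
          ¬ ∃ f : Fin k → Fin n, StrictMono f ∧
              ∀ i j : Fin k, A i < A j ↔ ty (f i) < ty (f j) :=
  stmt13_general k A Γ havoid Γx hmeas hdis n
end

section
/- Let π, π̃ ∈ S(n) be permutations with geometric representations sharing x-coordinates, where π has y-coordinates y_i = (π(i)−0.5)/n, and suppose for all i in a set S ⊆ [n] we have |y_i − ỹ_i| ≤ 2√δ where ỹ_i are distinct y-coordinates representing π̃. Then for each i ∈ S, |π(i) − π̃(i)| ≤ 4√δ·n + |[n]\S|, and consequently Σ_{i=1}^n |π(i) − π̃(i)| ≤ (4√δ + |[n]\S|/n)·n² + |[n]\S|·n. -/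
/-!
On `S` the points `ty j` lie within `ε` of the evenly spaced points `(π j + 1/2)/n`, so
`π j > π i + 2εn` forces `ty j > ty i` when `i, j ∈ S`. Hence the indices counted by the rank
of `i` under `ty` but not under `π` (or conversely) are either outside `S` or have `π`-values
in a window of width `2εn` next to `π i`, and there are at most `2εn` of the latter. Summing
the pointwise bound over `S`, and the trivial bound `n` over the complement, gives the total.
-/

open Finset

lemma Finset.card_filter_le_card_filter_add_card_compl {ι : Type*} [Fintype ι] [DecidableEq ι]
    (S : Finset ι) {p q : ι → Prop} [DecidablePred p] [DecidablePred q]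
    (h : ∀ j ∈ S, p j → q j) : #{j | p j} ≤ #{j | q j} + #Sᶜ := by
  refine (card_le_card fun j hj => ?_).trans (card_union_le _ _)
  by_cases hjS : j ∈ S
  · simp_all
  · simp [hjS]

lemma Fin.card_filter_cast_le_le (n : ℕ) {x : ℝ} (hx : 0 ≤ x) :
    (#{k : Fin n | (k : ℝ) ≤ x} : ℝ) ≤ x + 1 := by
  have hfloor : #{k : Fin n | (k : ℝ) ≤ x} = #{k : Fin n | k < ⌊x⌋₊ + 1} := by
    simp only [Nat.lt_succ_iff, Nat.le_floor_iff hx]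
  rw [hfloor, Fin.card_filter_val_lt]
  calc ((min n (⌊x⌋₊ + 1) : ℕ) : ℝ) ≤ ⌊x⌋₊ + 1 := by exact_mod_cast min_le_right _ _
    _ ≤ x + 1 := by gcongr; exact Nat.floor_le hx

lemma Fin.le_card_filter_cast_lt (n : ℕ) {x : ℝ} (hx : x ≤ n) :
    x ≤ #{k : Fin n | (k : ℝ) < x} := by
  have hceil : #{k : Fin n | (k : ℝ) < x} = #{k : Fin n | k < ⌈x⌉₊} := by
    simp only [Nat.lt_ceil]
  rw [hceil, Fin.card_filter_val_lt, Nat.cast_min]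
  exact le_min hx (Nat.le_ceil x)

lemma Equiv.Perm.card_filter_comp {α : Type*} [Fintype α] (π : Equiv.Perm α) (p : α → Prop)
    [DecidablePred p] : #{j | p (π j)} = #{k | p k} :=
  card_equiv π (by simp)

lemma card_filter_le_eq_card_filter_lt_add_one {ι : Type*} [Fintype ι] [DecidableEq ι]
    {ty : ι → ℝ} (hinj : Function.Injective ty) (i : ι) :
    #{j | ty j ≤ ty i} = #{j | ty j < ty i} + 1 := by
  have : (univ.filter fun j => ty j ≤ ty i) = insert i (univ.filter fun j => ty j < ty i) := by
    ext j
    simp [le_iff_lt_or_eq, hinj.eq_iff, or_comm]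
  rw [this, card_insert_of_notMem (by simp)]

lemma Fin.abs_cast_sub_cast_le {n : ℕ} (a b : Fin n) : |(a : ℝ) - b| ≤ n := by
  have ha : (a : ℝ) < n := by exact_mod_cast a.isLt
  have hb : (b : ℝ) < n := by exact_mod_cast b.isLt
  rw [abs_le]
  constructor <;> linarith [(a : ℕ).cast_nonneg (α := ℝ), (b : ℕ).cast_nonneg (α := ℝ)]

section RankDisplacement

variable {n : ℕ} {π πt : Equiv.Perm (Fin n)} {ty : Fin n → ℝ} {S : Finset (Fin n)} {ε : ℝ}

lemma lt_of_add_lt_of_dist_canonical_le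
    (hclose : ∀ i ∈ S, |((π i : ℝ) + 0.5) / n - ty i| ≤ ε) {i j : Fin n} (hi : i ∈ S) (hj : j ∈ S)
    (hij : (π i : ℝ) + 2 * ε * n < π j) : ty i < ty j := by
  have hn : (0 : ℝ) < n := by exact_mod_cast i.pos
  have hy : ((π i : ℝ) + 0.5) / n + 2 * ε < ((π j : ℝ) + 0.5) / n := by
    rw [div_add' _ _ _ hn.ne', div_lt_div_iff_of_pos_right hn]
    linarith
  linarith [(abs_le.mp (hclose i hi)).1, (abs_le.mp (hclose j hj)).2]

lemma rank_le_add_of_dist_canonical_le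
    (hind : ∀ i : Fin n, (πt i : ℕ) + 1 = (univ.filter fun j => ty j ≤ ty i).card)
    (hclose : ∀ i ∈ S, |((π i : ℝ) + 0.5) / n - ty i| ≤ ε) {i : Fin n} (hi : i ∈ S) :
    (πt i : ℝ) ≤ π i + 2 * ε * n + #Sᶜ := by
  have hε : 0 ≤ ε := (abs_nonneg _).trans (hclose i hi)
  have hcount := S.card_filter_le_card_filter_add_card_compl
    (p := fun j => ty j ≤ ty i) (q := fun j => (π j : ℝ) ≤ π i + 2 * ε * n)
    fun j hj hle => not_lt.mp fun hlt =>
      (lt_of_add_lt_of_dist_canonical_le hclose hi hj hlt).not_ge hle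
  rw [← hind i, π.card_filter_comp fun k : Fin n => (k : ℝ) ≤ π i + 2 * ε * n] at hcount
  have hfin := Fin.card_filter_cast_le_le n (x := π i + 2 * ε * n) (by positivity)
  have hcount' : ((πt i : ℕ) : ℝ) + 1 ≤ #{k : Fin n | (k : ℝ) ≤ π i + 2 * ε * n} + #Sᶜ := by
    exact_mod_cast hcount
  linarith

lemma le_rank_add_of_dist_canonical_le (hinj : Function.Injective ty)
    (hind : ∀ i : Fin n, (πt i : ℕ) + 1 = (univ.filter fun j => ty j ≤ ty i).card)
    (hclose : ∀ i ∈ S, |((π i : ℝ) + 0.5) / n - ty i| ≤ ε) {i : Fin n} (hi : i ∈ S) :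
    (π i : ℝ) ≤ πt i + 2 * ε * n + #Sᶜ := by
  have hε : 0 ≤ ε := (abs_nonneg _).trans (hclose i hi)
  have hrank : #{j | ty j < ty i} = πt i := by
    have := hind i
    rw [card_filter_le_eq_card_filter_lt_add_one hinj] at this
    omega
  have hcount := S.card_filter_le_card_filter_add_card_compl
    (p := fun j => (π j : ℝ) < π i - 2 * ε * n) (q := fun j => ty j < ty i)
    fun j hj hlt => lt_of_add_lt_of_dist_canonical_le hclose hj hi (by linarith)
  rw [hrank, π.card_filter_comp fun k : Fin n => (k : ℝ) < π i - 2 * ε * n] at hcount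
  have hπi : (π i : ℝ) < n := by exact_mod_cast (π i).isLt
  have hfin := Fin.le_card_filter_cast_lt n (x := π i - 2 * ε * n) (by nlinarith)
  have hcount' : (#{k : Fin n | (k : ℝ) < π i - 2 * ε * n} : ℝ) ≤ (πt i : ℕ) + #Sᶜ := by
    exact_mod_cast hcount
  linarith

lemma abs_sub_rank_le_of_dist_canonical_le (hinj : Function.Injective ty)
    (hind : ∀ i : Fin n, (πt i : ℕ) + 1 = (univ.filter fun j => ty j ≤ ty i).card)
    (hclose : ∀ i ∈ S, |((π i : ℝ) + 0.5) / n - ty i| ≤ ε) {i : Fin n} (hi : i ∈ S) :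
    |(π i : ℝ) - πt i| ≤ 2 * ε * n + #Sᶜ := by
  rw [abs_sub_le_iff]
  constructor
  · linarith [le_rank_add_of_dist_canonical_le hinj hind hclose hi]
  · linarith [rank_le_add_of_dist_canonical_le hind hclose hi]

end RankDisplacement

theorem stmt14_general (n : ℕ) (π πt : Equiv.Perm (Fin n)) (δ : ℝ)
    (ty : Fin n → ℝ) (hinj : Function.Injective ty)
    (hind : ∀ i : Fin n, (πt i : ℕ) + 1 = (univ.filter fun j => ty j ≤ ty i).card)
    (S : Finset (Fin n))
    (hclose : ∀ i ∈ S, |((π i : ℝ) + 0.5) / n - ty i| ≤ 2 * Real.sqrt δ) :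
    (∀ i ∈ S, |(π i : ℝ) - (πt i : ℝ)| ≤ 4 * Real.sqrt δ * n + ((n : ℝ) - S.card)) ∧
    ∑ i : Fin n, |(π i : ℝ) - (πt i : ℝ)| ≤
      (4 * Real.sqrt δ + ((n : ℝ) - S.card) / n) * n ^ 2 + ((n : ℝ) - S.card) * n := by
  have hS : #S ≤ n := (card_le_univ S).trans_eq (Fintype.card_fin n)
  have hcompl : (#Sᶜ : ℝ) = n - #S := by
    rw [card_compl, Fintype.card_fin, Nat.cast_sub hS]
  have hpoint : ∀ i ∈ S, |(π i : ℝ) - πt i| ≤ 4 * Real.sqrt δ * n + (n - #S) := fun i hi => by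
    have := abs_sub_rank_le_of_dist_canonical_le hinj hind hclose hi
    rw [hcompl] at this
    linarith
  refine ⟨hpoint, ?_⟩
  have hdiv : ((n : ℝ) - #S) / n * n ^ 2 = (n - #S) * n := by
    rcases eq_or_ne (n : ℝ) 0 with h | h
    · simp [h]
    · field_simp
  calc ∑ i, |(π i : ℝ) - πt i|
      = ∑ i ∈ S, |(π i : ℝ) - πt i| + ∑ i ∈ Sᶜ, |(π i : ℝ) - πt i| := (sum_add_sum_compl S _).symm
    _ ≤ #S • (4 * Real.sqrt δ * n + (n - #S)) + #Sᶜ • (n : ℝ) :=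
      add_le_add (sum_le_card_nsmul _ _ _ hpoint)
        (sum_le_card_nsmul _ _ _ fun i _ => Fin.abs_cast_sub_cast_le _ _)
    _ ≤ n * (4 * Real.sqrt δ * n + (n - #S)) + (n - #S) * n := by
      rw [nsmul_eq_mul, nsmul_eq_mul, hcompl]
      have hc : (0 : ℝ) ≤ n - #S := by rw [sub_nonneg]; exact_mod_cast hS
      gcongr
    _ = _ := by rw [add_mul, hdiv]; ring

/-- If `π̃` is induced by distinct reals `ty i` and for all `i` in a set
`S` the `ty i` are within `2√δ` of the canonical y-coordinates `y i = (π(i)+0.5)/n`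
of `π` (0-based values), then each `i ∈ S` satisfies
`|π(i) − π̃(i)| ≤ 4√δ·n + |[n]\S|`, and the total displacement is at most
`(4√δ + |[n]\S|/n)·n² + |[n]\S|·n`. -/
theorem stmt14 (n : ℕ) (hn : 0 < n) (π πt : Equiv.Perm (Fin n)) (δ : ℝ) (hδ : 0 ≤ δ)
    (ty : Fin n → ℝ) (hinj : Function.Injective ty)
    (hind : ∀ i : Fin n, (πt i : ℕ) + 1 = (univ.filter fun j => ty j ≤ ty i).card)
    (S : Finset (Fin n))
    (hclose : ∀ i ∈ S, |((π i : ℝ) + 0.5) / n - ty i| ≤ 2 * Real.sqrt δ) :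
    (∀ i ∈ S, |(π i : ℝ) - (πt i : ℝ)| ≤ 4 * Real.sqrt δ * n + ((n : ℝ) - S.card)) ∧
    ∑ i : Fin n, |(π i : ℝ) - (πt i : ℝ)| ≤
      (4 * Real.sqrt δ + ((n : ℝ) - S.card) / n) * n ^ 2 + ((n : ℝ) - S.card) * n :=
  stmt14_general n π πt δ ty hinj hind S hclose
end
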